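/- arXiv:math/0508253 — 6 statements merged into one kernel-verified Lean document; each statement's English description precedes it below -/
import Mathlib

section
/- Let t ∈ (0,2π) with t ≠ π. There exists a constant c > 0, depending only on t, such that for all integers k and n with n ≠ k: |(2πk+t)² − (2πn+t)²| ≥ c · (1 + ||k| − |n||) · (1 + |k| + |n|). -/
/-!
The difference of squares factors as `4π² (k - n) (k + n + t/π)`. Since `t/π` is not an integer,
`|m + t/π|` is bounded below both by the distance from `t/π` to `ℤ` and by `|m| - |t/π|`, hence by
a multiple of `1 + |m|`; and `|k - n| ≥ 1`. The weight `(1 + ||k| - |n||)(1 + |k| + |n|)` is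
exactly `(1 + |k - n|)(1 + |k + n|)`.
-/

section AbsIdentities

variable {α : Type*} [CommRing α] [LinearOrder α] [IsStrictOrderedRing α]

theorem abs_abs_sub_abs_add_abs_add_abs (x y : α) :
    |(|x| - |y|)| + (|x| + |y|) = |x - y| + |x + y| := by
  rcases abs_cases x with ⟨_, _⟩ | ⟨_, _⟩ <;> rcases abs_cases y with ⟨_, _⟩ | ⟨_, _⟩ <;>
    rcases abs_cases (x - y) with ⟨_, _⟩ | ⟨_, _⟩ <;>
    rcases abs_cases (x + y) with ⟨_, _⟩ | ⟨_, _⟩ <;>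
    rcases abs_cases (|x| - |y|) with ⟨_, _⟩ | ⟨_, _⟩ <;> linarith

theorem abs_abs_sub_abs_mul_abs_add_abs (x y : α) :
    |(|x| - |y|)| * (|x| + |y|) = |x - y| * |x + y| := by
  calc |(|x| - |y|)| * (|x| + |y|) = |(|x| - |y|) * (|x| + |y|)| := by
        rw [abs_mul, abs_of_nonneg (add_nonneg (abs_nonneg x) (abs_nonneg y))]
    _ = |(x - y) * (x + y)| := by
        congr 1
        linear_combination sq_abs x - sq_abs y
    _ = |x - y| * |x + y| := abs_mul _ _

theorem one_add_abs_abs_sub_abs_mul (x y : α) :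
    (1 + |(|x| - |y|)|) * (1 + |x| + |y|) = (1 + |x - y|) * (1 + |x + y|) := by
  linear_combination abs_abs_sub_abs_add_abs_add_abs x y + abs_abs_sub_abs_mul_abs_add_abs x y

end AbsIdentities

theorem exists_pos_mul_one_add_abs_le_abs_int_add {x : ℝ} (hx : ∀ m : ℤ, x ≠ m) :
    ∃ c > 0, ∀ m : ℤ, c * (1 + |(m : ℝ)|) ≤ |m + x| := by
  set δ := |x - round x|
  have hδ : 0 < δ := abs_pos.mpr (sub_ne_zero.mpr (hx _))
  refine ⟨δ / (2 * (1 + |x|)), by positivity, fun m => ?_⟩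
  have h_round : δ ≤ |m + x| := by
    calc δ ≤ |x - ((-m : ℤ) : ℝ)| := round_le x (-m)
      _ = |m + x| := by push_cast; ring_nf
  have h_tri : |(m : ℝ)| - |x| ≤ |m + x| := by
    simpa using abs_sub_abs_le_abs_sub (m : ℝ) (-x)
  have h_half : δ ≤ 1 / 2 := abs_sub_round x
  rw [div_mul_eq_mul_div, div_le_iff₀ (by positivity)]
  rcases le_total |(m : ℝ)| (2 * |x| + 1) with _ | _ <;>
    nlinarith [abs_nonneg (m : ℝ), abs_nonneg x]

/-- For `t ∈ (0,2π)`, `t ≠ π`, there is `c > 0` such that for all integers `k ≠ n`,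
`|(2πk+t)² − (2πn+t)²| ≥ c (1 + ||k|−|n||)(1 + |k| + |n|)`. -/
theorem eigenvalue_separation (t : ℝ) (ht : t ∈ Set.Ioo 0 (2 * Real.pi)) (htpi : t ≠ Real.pi) :
    ∃ c : ℝ, 0 < c ∧ ∀ k n : ℤ, n ≠ k →
      c * ((1 + |(|k| : ℝ) - (|n| : ℝ)|) * (1 + (|k| : ℝ) + (|n| : ℝ)))
        ≤ |(2 * Real.pi * (k : ℝ) + t) ^ 2 - (2 * Real.pi * (n : ℝ) + t) ^ 2| := by
  have hπ := Real.pi_pos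
  have h_nonint : ∀ m : ℤ, t / Real.pi ≠ m := by
    rintro m hm
    have h0 : (0 : ℝ) < m := hm ▸ div_pos ht.1 hπ
    have h2 : (m : ℝ) < 2 := hm ▸ (div_lt_iff₀ hπ).mpr ht.2
    obtain rfl : m = 1 := by
      have : 0 < m := by exact_mod_cast h0
      have : m < 2 := by exact_mod_cast h2
      omega
    rw [div_eq_iff hπ.ne'] at hm
    exact htpi (by simpa using hm)
  obtain ⟨c, hc, hsep⟩ := exists_pos_mul_one_add_abs_le_abs_int_add h_nonint
  refine ⟨2 * Real.pi ^ 2 * c, by positivity, fun k n hnk => ?_⟩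
  have h_factor : (2 * Real.pi * k + t) ^ 2 - (2 * Real.pi * n + t) ^ 2
      = 4 * Real.pi ^ 2 * (k - n) * ((k : ℝ) + n + t / Real.pi) := by
    field_simp; ring
  have h_diff : (1 : ℝ) ≤ |(k : ℝ) - n| := by
    exact_mod_cast Int.one_le_abs (sub_ne_zero.mpr hnk.symm)
  have h_sum := hsep (k + n)
  push_cast at h_sum
  rw [one_add_abs_abs_sub_abs_mul, h_factor, abs_mul, abs_mul,
    abs_of_pos (by positivity : (0 : ℝ) < 4 * Real.pi ^ 2)]
  calc 2 * Real.pi ^ 2 * c * ((1 + |(k : ℝ) - n|) * (1 + |(k : ℝ) + n|))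
      ≤ 4 * Real.pi ^ 2 * |(k : ℝ) - n| * (c * (1 + |(k : ℝ) + n|)) := by
        have := abs_nonneg ((k : ℝ) + n)
        have : 0 < Real.pi ^ 2 * c * (1 + |(k : ℝ) + n|) := by positivity
        nlinarith
    _ ≤ 4 * Real.pi ^ 2 * |(k : ℝ) - n| * |(k : ℝ) + n + t / Real.pi| := by gcongr
end

section
/- Let m ≥ 1 be an integer, t ∈ (0,2π) with t ≠ π, and K > 0. There exist N ∈ ℕ and C > 0, depending only on m, t, K, such that: for every k ∈ ℤ with |k| ≥ N, every λ ∈ ℂ with |λ − (2πk+t)²| ≤ K(1+|k|)^{1−1/m}, and every real d > 2|k|, one has λ ≠ (2πn+t)² for all integers n with |n| > d, and ∑_{n ∈ ℤ, |n| > d} 1/|λ − (2πn+t)²| ≤ C/d. -/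
private lemma aux_hP (t a n π : ℝ) (hπ : 3 < π) (ht0 : 0 < t) (ht2 : t < 2*π)
    (hna : n^2 = a^2) (hn1 : -a ≤ n) (ha : 5 ≤ a) :
    4*π^2*(a-1)^2 ≤ (2*π*n + t)^2 := by
  nlinarith [mul_nonneg (mul_nonneg (le_of_lt (by linarith : (0:ℝ) < 2*π - t))
      (by linarith : (0:ℝ) ≤ a - 1)) (by linarith : (0:ℝ) ≤ π),
    mul_nonneg (le_of_lt ht0) (by linarith : (0:ℝ) ≤ a + n), sq_nonneg (2*π - t)]

private lemma aux_hQ (t b k π : ℝ) (hπ : 3 < π) (ht0 : 0 < t) (ht2 : t < 2*π)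
    (hkb : k^2 = b^2) (hk1 : -b ≤ k) (hk2 : k ≤ b) :
    (2*π*k + t)^2 ≤ 4*π^2*(b+1)^2 := by
  nlinarith [mul_nonneg (le_of_lt ht0) (by linarith : (0:ℝ) ≤ b - k), sq_nonneg (2*π - t),
    mul_nonneg (mul_nonneg (by linarith : (0:ℝ) ≤ π) (by linarith : (0:ℝ) ≤ b))
      (by linarith : (0:ℝ) ≤ 2*π - t)]

private lemma aux_main (a b K π : ℝ) (hπ : 3 < π) (hb : 2 ≤ b) (hK : 0 < K) (hKb : K ≤ b)
    (hab : 2*b < a) (ha : 5 ≤ a) :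
    a^2 + 4*π^2*(b+1)^2 + K*(1+b) ≤ 4*π^2*(a-1)^2 := by
  nlinarith [sq_nonneg (a - 2*b), sq_nonneg (a-5),
    mul_pos (by linarith : (0:ℝ) < π - 3) (by linarith : (0:ℝ) < π + 3),
    sq_nonneg (a - 2*b - 1),
    mul_nonneg (by linarith : (0:ℝ) ≤ a - 2*b) (by linarith : (0:ℝ) ≤ b)]


/-- For `m ≥ 1`, `t ∈ (0,2π)`, `t ≠ π`, `K > 0` there are `N, C` such that: for `|k| ≥ N`,
`λ` with `|λ − (2πk+t)²| ≤ K (1+|k|)^{1−1/m}` and real `d > 2|k|`, we have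
`λ ≠ (2πn+t)²` whenever `|n| > d`, and `∑_{|n| > d} 1/|λ − (2πn+t)²| ≤ C/d`
(the sum converging). -/
theorem sum_inverse_distance_tail (m : ℕ) (hm : 1 ≤ m) (t : ℝ)
    (ht : t ∈ Set.Ioo 0 (2 * Real.pi)) (htpi : t ≠ Real.pi) (K : ℝ) (hK : 0 < K) :
    ∃ (N : ℕ) (C : ℝ), 0 < C ∧
      ∀ k : ℤ, (N : ℤ) ≤ |k| → ∀ lam : ℂ,
        ‖lam - (((2 * Real.pi * (k : ℝ) + t) ^ 2 : ℝ) : ℂ)‖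
            ≤ K * (1 + (|k| : ℝ)) ^ ((1 : ℝ) - 1 / (m : ℝ)) →
        ∀ d : ℝ, 2 * (|k| : ℝ) < d →
          (∀ n : ℤ, d < (|n| : ℝ) →
            lam ≠ (((2 * Real.pi * (n : ℝ) + t) ^ 2 : ℝ) : ℂ)) ∧
          Summable (fun n : {n : ℤ // d < (|n| : ℝ)} =>
            1 / ‖lam - (((2 * Real.pi * ((n : ℤ) : ℝ) + t) ^ 2 : ℝ) : ℂ)‖) ∧
          ∑' n : {n : ℤ // d < (|n| : ℝ)},
              1 / ‖lam - (((2 * Real.pi * ((n : ℤ) : ℝ) + t) ^ 2 : ℝ) : ℂ)‖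
            ≤ C / d := by
  obtain ⟨ht0, ht2⟩ := ht
  have hπ : 3 < Real.pi := Real.pi_gt_three
  refine ⟨max 2 ⌈K⌉₊, 4, by norm_num, ?_⟩
  intro k hk lam hlam d hd
  set π := Real.pi
  set b : ℝ := |(k : ℝ)| with hbdef
  have hNk : ((max 2 ⌈K⌉₊ : ℕ) : ℝ) ≤ b := by
    rw [hbdef, ← Int.cast_abs]; exact_mod_cast hk
  have hb2 : 2 ≤ b := le_trans (by exact_mod_cast le_max_left 2 ⌈K⌉₊) hNk
  have hKb : K ≤ b :=
    le_trans (Nat.le_ceil K) (le_trans (by exact_mod_cast le_max_right 2 ⌈K⌉₊) hNk)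
  have hk1 : -b ≤ (k : ℝ) := neg_abs_le _
  have hk2 : (k : ℝ) ≤ b := le_abs_self _
  have hkb : (k : ℝ) ^ 2 = b ^ 2 := (sq_abs _).symm
  have hd4 : 4 < d := by nlinarith
  have hd0 : 0 < d := by linarith
  -- the bound on λ's distance to μ_k, with rpow replaced by power 1
  have hlam' : ‖lam - (((2 * π * (k : ℝ) + t) ^ 2 : ℝ) : ℂ)‖ ≤ K * (1 + b) := by
    refine hlam.trans ?_
    have h1 : (1 + b) ^ ((1 : ℝ) - 1 / (m : ℝ)) ≤ (1 + b) ^ (1 : ℝ) := by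
      apply Real.rpow_le_rpow_of_exponent_le (by linarith)
      have : 0 ≤ 1 / (m : ℝ) := by positivity
      linarith
    rw [Real.rpow_one] at h1
    exact mul_le_mul_of_nonneg_left h1 hK.le
  -- key lower bound on |λ - μ_n|
  have key : ∀ n : ℤ, d < |(n : ℝ)| →
      ((n : ℝ)) ^ 2 ≤ ‖lam - (((2 * π * (n : ℝ) + t) ^ 2 : ℝ) : ℂ)‖ := by
    intro n hn
    set a : ℝ := |(n : ℝ)| with hadef
    have ha5 : 5 ≤ a := by
      have h4 : (4 : ℤ) < |n| := by
        have : (4 : ℝ) < ((|n| : ℤ) : ℝ) := by rw [Int.cast_abs]; linarith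
        exact_mod_cast this
      have h5 : (5 : ℤ) ≤ |n| := h4
      calc (5 : ℝ) = ((5 : ℤ) : ℝ) := by norm_num
        _ ≤ ((|n| : ℤ) : ℝ) := by exact_mod_cast h5
        _ = a := by rw [Int.cast_abs]
    have hna : (n : ℝ) ^ 2 = a ^ 2 := (sq_abs _).symm
    have hn1 : -a ≤ (n : ℝ) := neg_abs_le _
    have hn2 : (n : ℝ) ≤ a := le_abs_self _
    have hP : 4 * π ^ 2 * (a - 1) ^ 2 ≤ (2 * π * (n : ℝ) + t) ^ 2 :=
      aux_hP t a (n : ℝ) π hπ ht0 ht2 hna hn1 ha5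
    have hQ : (2 * π * (k : ℝ) + t) ^ 2 ≤ 4 * π ^ 2 * (b + 1) ^ 2 :=
      aux_hQ t b (k : ℝ) π hπ ht0 ht2 hkb hk1 hk2
    have hmain : a ^ 2 + 4 * π ^ 2 * (b + 1) ^ 2 + K * (1 + b) ≤ 4 * π ^ 2 * (a - 1) ^ 2 :=
      aux_main a b K π hπ hb2 hK hKb (lt_trans hd hn) ha5
    set P : ℝ := (2 * π * (n : ℝ) + t) ^ 2
    set Q : ℝ := (2 * π * (k : ℝ) + t) ^ 2
    have tri : ‖(P : ℂ) - (Q : ℂ)‖ ≤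
        ‖(P : ℂ) - lam‖ + ‖lam - (Q : ℂ)‖ :=
      norm_sub_le_norm_sub_add_norm_sub _ _ _
    have he1 : ‖(P : ℂ) - (Q : ℂ)‖ = |P - Q| := by
      rw [← Complex.ofReal_sub, Complex.norm_real, Real.norm_eq_abs]
    have he2 : ‖(P : ℂ) - lam‖ = ‖lam - (P : ℂ)‖ := by
      rw [norm_sub_rev]
    have hPQ : P - Q ≤ |P - Q| := le_abs_self _
    rw [hna]
    have := norm_nonneg (lam - (P : ℂ))
    rw [he1, he2] at tri
    linarith
  have hpos : ∀ n : ℤ, d < |(n : ℝ)| → 0 < ((n : ℝ)) ^ 2 := by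
    intro n hn
    have hn0 : (n : ℝ) ≠ 0 := by
      intro h; rw [h] at hn; simp at hn; linarith
    positivity
  -- term-wise comparison
  have hle : ∀ n : {n : ℤ // d < (|n| : ℝ)},
      1 / ‖lam - (((2 * π * ((n : ℤ) : ℝ) + t) ^ 2 : ℝ) : ℂ)‖
        ≤ (((n : ℤ) : ℝ) ^ 2)⁻¹ := by
    intro n
    rw [one_div]
    exact inv_anti₀ (hpos n n.2) (key n n.2)
  have hsum2 : Summable (fun n : {n : ℤ // d < (|n| : ℝ)} => (((n : ℤ) : ℝ) ^ 2)⁻¹) := by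
    have h := (Real.summable_one_div_int_pow (p := 2)).2 (by norm_num)
    have h' := h.subtype {n : ℤ | d < (|n| : ℝ)}
    simp only [one_div] at h'
    exact h'
  have hsum1 : Summable (fun n : {n : ℤ // d < (|n| : ℝ)} =>
      1 / ‖lam - (((2 * π * ((n : ℤ) : ℝ) + t) ^ 2 : ℝ) : ℂ)‖) := by
    refine Summable.of_nonneg_of_le (fun n => by positivity) hle hsum2
  refine ⟨?_, hsum1, ?_⟩
  · intro n hn heq
    have h := key n hn
    rw [heq, sub_self, norm_zero] at h
    have := hpos n hn
    linarith
  · -- tail sum estimate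
    set M : ℕ := ⌊d⌋₊ with hMdef
    have hdM : d < (M : ℝ) + 1 := Nat.lt_floor_add_one d
    have hM1 : (0 : ℝ) < (M : ℝ) + 1 := by positivity
    have hMn : ∀ n : {n : ℤ // d < (|n| : ℝ)}, M < n.1.natAbs := by
      intro n
      have h : d < ((n.1.natAbs : ℕ) : ℝ) := by
        have h2 := n.2
        rw [Nat.cast_natAbs, Int.cast_abs]
        exact h2
      exact (Nat.floor_lt hd0.le).mpr h
    calc ∑' n : {n : ℤ // d < (|n| : ℝ)},
          1 / ‖lam - (((2 * π * ((n : ℤ) : ℝ) + t) ^ 2 : ℝ) : ℂ)‖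
        ≤ ∑' n : {n : ℤ // d < (|n| : ℝ)}, (((n : ℤ) : ℝ) ^ 2)⁻¹ :=
          Summable.tsum_le_tsum hle hsum1 hsum2
      _ ≤ 4 / ((M : ℝ) + 1) := by
          apply Summable.tsum_le_of_sum_le hsum2
          intro s
          have hgen : ∀ u : Finset {n : ℤ // d < (|n| : ℝ)},
              Set.InjOn (fun n : {n : ℤ // d < (|n| : ℝ)} => n.1.natAbs) u →
              ∑ n ∈ u, ((n.1 : ℝ) ^ 2)⁻¹ ≤ 2 / ((M : ℝ) + 1) := by
            intro u hinj
            set T : Finset ℕ := u.image (fun n : {n : ℤ // d < (|n| : ℝ)} => n.1.natAbs) with hTdef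
            have he : ∑ a ∈ T, (((a : ℕ) : ℝ) ^ 2)⁻¹ = ∑ n ∈ u, ((n.1 : ℝ) ^ 2)⁻¹ := by
              rw [hTdef, Finset.sum_image (fun x hx y hy h => hinj hx hy h)]
              apply Finset.sum_congr rfl
              intro n _
              congr 1
              rw [Nat.cast_natAbs, Int.cast_abs, sq_abs]
            rw [← he]
            set B : ℕ := T.sup id + 1 with hBdef
            have hsub : T ⊆ Finset.Ioo M B := by
              intro a ha
              rw [Finset.mem_Ioo]
              constructor
              · obtain ⟨n, hn, rfl⟩ := Finset.mem_image.mp ha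
                exact hMn n
              · exact Nat.lt_succ_of_le (Finset.le_sup (f := id) ha)
            calc ∑ a ∈ T, (((a : ℕ) : ℝ) ^ 2)⁻¹
                ≤ ∑ a ∈ Finset.Ioo M B, (((a : ℕ) : ℝ) ^ 2)⁻¹ :=
                  Finset.sum_le_sum_of_subset_of_nonneg hsub (fun i _ _ => by positivity)
              _ ≤ 2 / ((M : ℝ) + 1) := sum_Ioo_inv_sq_le M B
          rw [← Finset.sum_filter_add_sum_filter_not s (fun n => 0 < n.1)]
          have h1 : ∑ n ∈ s.filter (fun n : {n : ℤ // d < (|n| : ℝ)} => 0 < n.1), ((n.1 : ℝ) ^ 2)⁻¹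
              ≤ 2 / ((M : ℝ) + 1) := by
            apply hgen
            intro x hx y hy hxy
            simp only [Finset.coe_filter, Set.mem_setOf_eq] at hx hy
            exact Subtype.ext ((Int.natAbs_inj_of_nonneg_of_nonneg hx.2.le hy.2.le).mp hxy)
          have h2 : ∑ n ∈ s.filter (fun n : {n : ℤ // d < (|n| : ℝ)} => ¬ 0 < n.1), ((n.1 : ℝ) ^ 2)⁻¹
              ≤ 2 / ((M : ℝ) + 1) := by
            apply hgen
            intro x hx y hy hxy
            simp only [Finset.coe_filter, Set.mem_setOf_eq] at hx hy
            exact Subtype.ext ((Int.natAbs_inj_of_nonpos_of_nonpos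
              (le_of_not_gt hx.2) (le_of_not_gt hy.2)).mp hxy)
          have h4 : 2 / ((M : ℝ) + 1) + 2 / ((M : ℝ) + 1) = 4 / ((M : ℝ) + 1) := by ring
          linarith
      _ ≤ 4 / d := div_le_div_of_nonneg_left (by norm_num) hd0 hdM.le
end

section
/- Let m ≥ 1 be an integer, t ∈ (0,2π) with t ≠ π, and K > 0. There exist N ∈ ℕ and C > 0, depending only on m, t, K, such that for every k ∈ ℤ with |k| ≥ N and every λ ∈ ℂ with |λ − (2πk+t)²| ≤ K(1+|k|)^{1−1/m}: ∑_{n ∈ ℤ, n ≠ k} 1/|λ − (2πn+t)²|² ≤ C/(1+|k|)². -/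
open Real Filter

lemma aux_summable_shift (s : ℝ) (h0 : 0 < s) (h2 : s ≤ 2) :
    Summable (fun j : ℤ => 1 / ((j : ℝ) + s) ^ 2) := by
  have hg : Summable (fun j : ℤ => 4 * (1 / (j : ℝ) ^ 2)) :=
    ((summable_one_div_int_pow (p := 2)).mpr one_lt_two).mul_left 4
  apply Summable.of_norm_bounded_eventually hg
  rw [Filter.eventually_cofinite]
  apply Set.Finite.subset (Set.finite_Icc (-4 : ℤ) 4)
  intro j hj
  simp only [Set.mem_setOf_eq, not_le] at hj
  by_contra hmem
  simp only [Set.mem_Icc, not_and_or, not_le] at hmem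
  have hj4 : (4 : ℝ) ≤ |(j : ℝ)| := by
    have h4 : (4 : ℤ) ≤ |j| := by
      rcases hmem with h | h
      · rw [abs_of_neg (by omega)]; omega
      · rw [abs_of_pos (by omega)]; omega
    exact_mod_cast h4
  have habs : |(j : ℝ)| - 2 ≤ |(j : ℝ) + s| := by
    have h := abs_add_le ((j : ℝ) + s) (-s)
    rw [abs_neg, abs_of_pos h0] at h
    have he : ((j : ℝ) + s) + -s = (j : ℝ) := by ring
    rw [he] at h
    linarith
  have habs2 : |(j : ℝ)| / 2 ≤ |(j : ℝ) + s| := by linarith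
  have hpos2 : (0 : ℝ) < ((j : ℝ) + s) ^ 2 := by
    nlinarith [sq_abs ((j : ℝ) + s)]
  have hposj : (0 : ℝ) < ((j : ℝ)) ^ 2 := by
    nlinarith [sq_abs ((j : ℝ))]
  have hlhs : ‖1 / ((j : ℝ) + s) ^ 2‖ = 1 / ((j : ℝ) + s) ^ 2 := by
    rw [Real.norm_eq_abs, abs_of_nonneg (by positivity)]
  have hsq : (|(j : ℝ)| / 2) ^ 2 ≤ |(j : ℝ) + s| ^ 2 :=
    pow_le_pow_left₀ (by positivity) habs2 2
  have hle : (1 : ℝ) / ((j : ℝ) + s) ^ 2 ≤ 4 / (j : ℝ) ^ 2 := by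
    rw [div_le_div_iff₀ hpos2 hposj]
    nlinarith [hsq, sq_abs ((j : ℝ) + s), sq_abs ((j : ℝ))]
  rw [hlhs, mul_one_div] at hj
  linarith

set_option maxHeartbeats 1000000 in
/-- For `m ≥ 1`, `t ∈ (0,2π)`, `t ≠ π`, `K > 0` there are `N, C` such that for `|k| ≥ N` and
`λ` with `|λ − (2πk+t)²| ≤ K (1+|k|)^{1−1/m}`:
`∑_{n ≠ k} 1/|λ − (2πn+t)²|² ≤ C/(1+|k|)²` (the sum converging). -/
theorem sum_inverse_distance_sq (m : ℕ) (hm : 1 ≤ m) (t : ℝ)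
    (ht : t ∈ Set.Ioo 0 (2 * Real.pi)) (htpi : t ≠ Real.pi) (K : ℝ) (hK : 0 < K) :
    ∃ (N : ℕ) (C : ℝ), 0 < C ∧
      ∀ k : ℤ, (N : ℤ) ≤ |k| → ∀ lam : ℂ,
        norm (lam - (((2 * Real.pi * (k : ℝ) + t) ^ 2 : ℝ) : ℂ))
            ≤ K * (1 + (|k| : ℝ)) ^ ((1 : ℝ) - 1 / (m : ℝ)) →
        Summable (fun n : {n : ℤ // n ≠ k} =>
          1 / norm (lam - (((2 * Real.pi * ((n : ℤ) : ℝ) + t) ^ 2 : ℝ) : ℂ)) ^ 2) ∧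
        ∑' n : {n : ℤ // n ≠ k},
            1 / norm (lam - (((2 * Real.pi * ((n : ℤ) : ℝ) + t) ^ 2 : ℝ) : ℂ)) ^ 2
          ≤ C / (1 + (|k| : ℝ)) ^ 2 := by
  obtain ⟨ht0, ht2⟩ := ht
  have hπ : (0 : ℝ) < π := Real.pi_pos
  set s : ℝ := t / π with hs
  have hs0 : 0 < s := div_pos ht0 hπ
  have hs2 : s < 2 := by rw [hs, div_lt_iff₀ hπ]; linarith
  have hs1 : s ≠ 1 := by
    intro h
    apply htpi
    have : t = π := by
      rw [hs] at h
      field_simp at h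
      exact h
    exact this
  set δ : ℝ := min (min s (2 - s)) |s - 1| with hδdef
  have hδ0 : 0 < δ :=
    lt_min (lt_min hs0 (by linarith)) (abs_pos.mpr (sub_ne_zero.mpr hs1))
  set δ' : ℝ := min 1 δ with hδ'def
  have hδ'0 : 0 < δ' := lt_min one_pos hδ0
  have hδ'1 : δ' ≤ 1 := min_le_left _ _
  have hδ'δ : δ' ≤ δ := min_le_right _ _
  -- lower bound for |z + s| over integers z
  have hzb : ∀ z : ℤ, δ ≤ |(z : ℝ) + s| := by
    intro z
    rcases le_or_gt 0 z with h | h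
    · have hz : (0 : ℝ) ≤ (z : ℝ) := by exact_mod_cast h
      rw [abs_of_pos (by linarith)]
      have h1 : δ ≤ s := (min_le_left _ _).trans (min_le_left _ _)
      linarith
    · rcases eq_or_lt_of_le (show z ≤ -1 by omega) with h1 | h1
      · have hz : (z : ℝ) = -1 := by exact_mod_cast congrArg (Int.cast : ℤ → ℝ) h1
        rw [hz, show (-1 : ℝ) + s = -(1 - s) by ring, abs_neg,
          show |1 - s| = |s - 1| by rw [abs_sub_comm]]
        exact min_le_right _ _
      · have hz : (z : ℝ) ≤ -2 := by exact_mod_cast (show z ≤ -2 by omega)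
        rw [abs_of_neg (by linarith)]
        have h1 : δ ≤ 2 - s := (min_le_left _ _).trans (min_le_right _ _)
        linarith
  -- the fixed sums
  set A1 : ℝ := ∑' n : ℤ, 1 / (n : ℝ) ^ 2 with hA1def
  set A2 : ℝ := ∑' j : ℤ, 1 / ((j : ℝ) + s) ^ 2 with hA2def
  have hsum1 : Summable (fun n : ℤ => 1 / (n : ℝ) ^ 2) :=
    (summable_one_div_int_pow (p := 2)).mpr one_lt_two
  have hsum2 : Summable (fun j : ℤ => 1 / ((j : ℝ) + s) ^ 2) :=
    aux_summable_shift s hs0 hs2.le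
  have hA1nn : 0 ≤ A1 := tsum_nonneg (fun n => by positivity)
  have hA2nn : 0 ≤ A2 := tsum_nonneg (fun n => by positivity)
  set R : ℝ := (K / (π ^ 2 * δ')) ^ m with hRdef
  have hR0 : 0 ≤ R := by positivity
  refine ⟨max 3 ⌈R⌉₊, (A1 + A2 + 1) / π ^ 4, by positivity, ?_⟩
  intro k hk lam hlam
  have hk3 : (3 : ℤ) ≤ |k| := le_trans (by exact_mod_cast le_max_left 3 ⌈R⌉₊) hk
  have hkR : (⌈R⌉₊ : ℤ) ≤ |k| := le_trans (by exact_mod_cast le_max_right 3 ⌈R⌉₊) hk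
  set x : ℝ := 1 + |(k : ℝ)| with hxdef
  have hk3' : (3 : ℝ) ≤ |(k : ℝ)| := by exact_mod_cast hk3
  have hx0 : (0 : ℝ) < x := by rw [hxdef]; linarith
  have hx4 : (4 : ℝ) ≤ x := by rw [hxdef]; linarith
  have hxR : R ≤ x := by
    have h1 : ((⌈R⌉₊ : ℕ) : ℝ) ≤ |(k : ℝ)| := by exact_mod_cast hkR
    have h2 := Nat.le_ceil R
    rw [hxdef]; linarith
  -- the key exponent inequality
  have hmne : ((m : ℝ)) ≠ 0 := by
    have : (0 : ℝ) < (m : ℝ) := by exact_mod_cast hm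
    linarith
  have hKx : K * x ^ ((1 : ℝ) - 1 / (m : ℝ)) ≤ π ^ 2 * δ' * x := by
    set q : ℝ := K / (π ^ 2 * δ') with hqdef
    have hq0 : 0 < q := by positivity
    have hstep : q ≤ x ^ ((1 : ℝ) / m) := by
      calc q = (q ^ m) ^ ((1 : ℝ) / m) := by
            rw [← Real.rpow_natCast q m, ← Real.rpow_mul hq0.le,
              mul_one_div_cancel hmne, Real.rpow_one]
        _ ≤ x ^ ((1 : ℝ) / m) :=
            Real.rpow_le_rpow (by positivity) hxR (by positivity)
    have hKeq : K = π ^ 2 * δ' * q := by rw [hqdef]; field_simp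
    have hnn : (0 : ℝ) ≤ x ^ ((1 : ℝ) - 1 / (m : ℝ)) := Real.rpow_nonneg hx0.le _
    calc K * x ^ ((1 : ℝ) - 1 / (m : ℝ))
        = π ^ 2 * δ' * (q * x ^ ((1 : ℝ) - 1 / (m : ℝ))) := by rw [hKeq]; ring
      _ ≤ π ^ 2 * δ' * (x ^ ((1 : ℝ) / m) * x ^ ((1 : ℝ) - 1 / (m : ℝ))) := by
          apply mul_le_mul_of_nonneg_left _ (by positivity)
          exact mul_le_mul_of_nonneg_right hstep hnn
      _ = π ^ 2 * δ' * x := by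
          rw [← Real.rpow_add hx0, show (1 : ℝ) / m + (1 - 1 / (m : ℝ)) = 1 by ring,
            Real.rpow_one]
  -- abbreviation
  set X : ℤ → ℝ := fun j => (2 * π * (j : ℝ) + t) ^ 2 with hXdef
  have hlam' : norm (lam - ((X k : ℝ) : ℂ)) ≤ π ^ 2 * δ' * x := le_trans hlam hKx
  set c : ℝ := 1 / (π ^ 4 * x ^ 2) with hcdef
  have hc0 : 0 < c := by positivity
  -- the comparison function
  set g : ℤ → ℝ := fun n => 1 / ((n : ℝ) - (k : ℝ)) ^ 2 + 1 / ((n : ℝ) + (k : ℝ) + s) ^ 2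
    with hgdef
  have hg1 : Summable (fun n : ℤ => 1 / ((n : ℝ) - (k : ℝ)) ^ 2) := by
    have h := (Equiv.subRight k).summable_iff.mpr hsum1
    have he : ((fun n : ℤ => 1 / (n : ℝ) ^ 2) ∘ (Equiv.subRight k))
        = fun n : ℤ => 1 / ((n : ℝ) - (k : ℝ)) ^ 2 := by
      funext n
      simp only [Function.comp_apply, Equiv.subRight_apply]
      push_cast
      ring
    rwa [he] at h
  have hg2 : Summable (fun n : ℤ => 1 / ((n : ℝ) + (k : ℝ) + s) ^ 2) := by
    have h := (Equiv.addRight k).summable_iff.mpr hsum2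
    have he : ((fun j : ℤ => 1 / ((j : ℝ) + s) ^ 2) ∘ (Equiv.addRight k))
        = fun n : ℤ => 1 / ((n : ℝ) + (k : ℝ) + s) ^ 2 := by
      funext n
      simp only [Function.comp_apply, Equiv.coe_addRight]
      push_cast
      ring
    rwa [he] at h
  have hgsum : Summable g := hg1.add hg2
  have hgtsum : ∑' n : ℤ, g n = A1 + A2 := by
    rw [hgdef, Summable.tsum_add hg1 hg2]
    congr 1
    · have he : (fun n : ℤ => 1 / ((n : ℝ) - (k : ℝ)) ^ 2)
          = fun n : ℤ => (fun j : ℤ => 1 / (j : ℝ) ^ 2) ((Equiv.subRight k) n) := by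
        funext n
        simp only [Equiv.subRight_apply]
        push_cast
        ring
      rw [he, Equiv.tsum_eq (Equiv.subRight k) (fun j : ℤ => 1 / (j : ℝ) ^ 2)]
    · have he : (fun n : ℤ => 1 / ((n : ℝ) + (k : ℝ) + s) ^ 2)
          = fun n : ℤ => (fun j : ℤ => 1 / ((j : ℝ) + s) ^ 2) ((Equiv.addRight k) n) := by
        funext n
        simp only [Equiv.coe_addRight]
        push_cast
        ring
      rw [he, Equiv.tsum_eq (Equiv.addRight k) (fun j : ℤ => 1 / ((j : ℝ) + s) ^ 2)]
  have hgnn : ∀ n : ℤ, 0 ≤ g n := fun n => by rw [hgdef]; positivity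
  -- the pointwise bound
  have hpt : ∀ n : ℤ, n ≠ k →
      1 / norm (lam - ((X n : ℝ) : ℂ)) ^ 2 ≤ c * g n := by
    intro n hn
    set a : ℝ := |(n : ℝ) - (k : ℝ)| with hadef
    set b : ℝ := |(n : ℝ) + (k : ℝ) + s| with hbdef
    have ha1 : 1 ≤ a := by
      have h1 : (1 : ℤ) ≤ |n - k| := Int.one_le_abs (sub_ne_zero.mpr hn)
      have h2 : (1 : ℝ) ≤ |((n - k : ℤ) : ℝ)| := by
        rw [show |((n - k : ℤ) : ℝ)| = ((|n - k| : ℤ) : ℝ) by push_cast; ring]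
        exact_mod_cast h1
      rw [hadef]
      rwa [show ((n - k : ℤ) : ℝ) = (n : ℝ) - (k : ℝ) by push_cast; ring] at h2
    have hbδ : δ ≤ b := by
      have h := hzb (n + k)
      rw [hbdef]
      rwa [show ((n + k : ℤ) : ℝ) = (n : ℝ) + (k : ℝ) by push_cast; ring] at h
    have ha0 : 0 < a := by linarith
    have hb0 : 0 < b := by linarith
    have hδ'a : δ' ≤ a := by linarith
    have hδ'b : δ' ≤ b := by linarith
    -- a + b ≥ x
    have habx : x ≤ a + b := by
      have h := abs_add_le ((n : ℝ) + (k : ℝ) + s) (-(((n : ℝ) - (k : ℝ))))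
      rw [abs_neg] at h
      rw [show ((n : ℝ) + (k : ℝ) + s) + -(((n : ℝ) - (k : ℝ))) = 2 * (k : ℝ) + s by ring]
        at h
      have h2 : 2 * |(k : ℝ)| - s ≤ |2 * (k : ℝ) + s| := by
        have h3 := abs_add_le (2 * (k : ℝ) + s) (-s)
        rw [abs_neg, abs_of_pos hs0] at h3
        rw [show (2 * (k : ℝ) + s) + -s = 2 * (k : ℝ) by ring] at h3
        rw [abs_mul, abs_two] at h3
        linarith
      rw [← hadef, ← hbdef] at h
      rw [hxdef]
      linarith
    -- δ' * x ≤ 2 * (a * b)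
    have habδ : δ' * x ≤ 2 * (a * b) := by
      rcases le_total a b with hcase | hcase
      · have h1 : δ' * x ≤ δ' * (2 * b) :=
          mul_le_mul_of_nonneg_left (by linarith) hδ'0.le
        have h2 : δ' * b ≤ a * b := mul_le_mul_of_nonneg_right hδ'a hb0.le
        linarith
      · have h1 : δ' * x ≤ δ' * (2 * a) :=
          mul_le_mul_of_nonneg_left (by linarith) hδ'0.le
        have h2 : δ' * a ≤ b * a := mul_le_mul_of_nonneg_right hδ'b ha0.le
        have h3 : b * a = a * b := mul_comm b a
        linarith
    -- difference of squares
    have hdiff : X n - X k = 4 * π ^ 2 * (((n : ℝ) - (k : ℝ)) * ((n : ℝ) + (k : ℝ) + s)) := by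
      have hts : π * s = t := by rw [hs]; field_simp
      have h : (2 * π * (n : ℝ) + t) ^ 2 - (2 * π * (k : ℝ) + t) ^ 2
          = 4 * π ^ 2 * (((n : ℝ) - (k : ℝ)) * ((n : ℝ) + (k : ℝ) + s)) := by
        linear_combination (4 * π * ((k : ℝ) - (n : ℝ))) * hts
      exact h
    have habseq : |X n - X k| = 4 * π ^ 2 * (a * b) := by
      rw [hdiff, abs_mul, abs_of_pos (show (0:ℝ) < 4 * π ^ 2 by positivity), abs_mul,
        ← hadef, ← hbdef]
    -- triangle inequality
    have htri : |X n - X k| ≤ norm (lam - ((X n : ℝ) : ℂ))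
        + norm (lam - ((X k : ℝ) : ℂ)) := by
      have h := norm_sub_le_norm_sub_add_norm_sub ((X n : ℝ) : ℂ) lam ((X k : ℝ) : ℂ)
      have heq : norm (((X n : ℝ) : ℂ) - lam) = norm (lam - ((X n : ℝ) : ℂ)) :=
        norm_sub_rev _ _
      rw [heq] at h
      calc |X n - X k| = norm (((X n - X k : ℝ)) : ℂ) := by rw [Complex.norm_real, Real.norm_eq_abs]
        _ = norm (((X n : ℝ) : ℂ) - ((X k : ℝ) : ℂ)) := by push_cast; ring_nf
        _ ≤ _ := h
    have hlow : 2 * π ^ 2 * (a * b) ≤ norm (lam - ((X n : ℝ) : ℂ)) := by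
      have h6 : π ^ 2 * δ' * x ≤ 2 * π ^ 2 * (a * b) := by
        have h := mul_le_mul_of_nonneg_left habδ (sq_nonneg π)
        linarith [h]
      linarith [htri, habseq, hlam', h6]
    have hlow0 : (0 : ℝ) < 2 * π ^ 2 * (a * b) := by positivity
    -- 1/abs² ≤ 1/(2π²ab)²
    have h9 : 1 / norm (lam - ((X n : ℝ) : ℂ)) ^ 2
        ≤ 1 / (2 * π ^ 2 * (a * b)) ^ 2 := by
      apply one_div_le_one_div_of_le (by positivity)
      exact pow_le_pow_left₀ hlow0.le hlow 2
    -- 1/(2π²ab)² ≤ c * g n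
    have h10 : 1 / (2 * π ^ 2 * (a * b)) ^ 2 ≤ c * g n := by
      have hga : ((n : ℝ) - (k : ℝ)) ^ 2 = a ^ 2 := (sq_abs _).symm
      have hgb : ((n : ℝ) + (k : ℝ) + s) ^ 2 = b ^ 2 := (sq_abs _).symm
      rw [hgdef]
      simp only [hga, hgb]
      rw [hcdef]
      rcases le_total a b with hcase | hcase
      · -- b ≥ x/2
        have hb2 : x ^ 2 ≤ 4 * b ^ 2 := by
          calc x ^ 2 ≤ (2 * b) ^ 2 := pow_le_pow_left₀ hx0.le (by linarith) 2
            _ = 4 * b ^ 2 := by ring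
        have key : 1 / (2 * π ^ 2 * (a * b)) ^ 2 ≤ 1 / (π ^ 4 * x ^ 2) * (1 / a ^ 2) := by
          rw [div_mul_div_comm, one_mul]
          apply one_div_le_one_div_of_le (by positivity)
          have h := mul_le_mul_of_nonneg_left hb2 (show (0:ℝ) ≤ π ^ 4 * a ^ 2 by positivity)
          calc π ^ 4 * x ^ 2 * a ^ 2 = π ^ 4 * a ^ 2 * x ^ 2 := by ring
            _ ≤ π ^ 4 * a ^ 2 * (4 * b ^ 2) := h
            _ = (2 * π ^ 2 * (a * b)) ^ 2 := by ring
        have hnn : (0 : ℝ) ≤ 1 / (π ^ 4 * x ^ 2) * (1 / b ^ 2) := by positivity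
        calc 1 / (2 * π ^ 2 * (a * b)) ^ 2 ≤ 1 / (π ^ 4 * x ^ 2) * (1 / a ^ 2) := key
          _ ≤ 1 / (π ^ 4 * x ^ 2) * (1 / a ^ 2 + 1 / b ^ 2) := by
              rw [mul_add]; linarith
      · have ha2 : x ^ 2 ≤ 4 * a ^ 2 := by
          calc x ^ 2 ≤ (2 * a) ^ 2 := pow_le_pow_left₀ hx0.le (by linarith) 2
            _ = 4 * a ^ 2 := by ring
        have key : 1 / (2 * π ^ 2 * (a * b)) ^ 2 ≤ 1 / (π ^ 4 * x ^ 2) * (1 / b ^ 2) := by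
          rw [div_mul_div_comm, one_mul]
          apply one_div_le_one_div_of_le (by positivity)
          have h := mul_le_mul_of_nonneg_left ha2 (show (0:ℝ) ≤ π ^ 4 * b ^ 2 by positivity)
          calc π ^ 4 * x ^ 2 * b ^ 2 = π ^ 4 * b ^ 2 * x ^ 2 := by ring
            _ ≤ π ^ 4 * b ^ 2 * (4 * a ^ 2) := h
            _ = (2 * π ^ 2 * (a * b)) ^ 2 := by ring
        have hnn : (0 : ℝ) ≤ 1 / (π ^ 4 * x ^ 2) * (1 / a ^ 2) := by positivity
        calc 1 / (2 * π ^ 2 * (a * b)) ^ 2 ≤ 1 / (π ^ 4 * x ^ 2) * (1 / b ^ 2) := key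
          _ ≤ 1 / (π ^ 4 * x ^ 2) * (1 / a ^ 2 + 1 / b ^ 2) := by
              rw [mul_add]; linarith
    exact le_trans h9 h10
  -- assemble
  have hfle : ∀ n : {n : ℤ // n ≠ k},
      1 / norm (lam - (((2 * Real.pi * ((n : ℤ) : ℝ) + t) ^ 2 : ℝ) : ℂ)) ^ 2
        ≤ c * g (n : ℤ) := fun n => hpt (n : ℤ) n.2
  have hcgsum : Summable (fun n : {n : ℤ // n ≠ k} => c * g (n : ℤ)) :=
    ((hgsum.mul_left c).comp_injective Subtype.val_injective)
  have hfsum : Summable (fun n : {n : ℤ // n ≠ k} =>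
      1 / norm (lam - (((2 * Real.pi * ((n : ℤ) : ℝ) + t) ^ 2 : ℝ) : ℂ)) ^ 2) :=
    Summable.of_nonneg_of_le (fun n => by positivity) hfle hcgsum
  refine ⟨hfsum, ?_⟩
  have hsub : Summable (fun n : {n : ℤ // n ≠ k} => g (n : ℤ)) :=
    hgsum.comp_injective Subtype.val_injective
  calc ∑' n : {n : ℤ // n ≠ k},
        1 / norm (lam - (((2 * Real.pi * ((n : ℤ) : ℝ) + t) ^ 2 : ℝ) : ℂ)) ^ 2
      ≤ ∑' n : {n : ℤ // n ≠ k}, c * g (n : ℤ) := Summable.tsum_le_tsum hfle hfsum hcgsum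
    _ = c * ∑' n : {n : ℤ // n ≠ k}, g (n : ℤ) := tsum_mul_left
    _ ≤ c * (A1 + A2) := by
        apply mul_le_mul_of_nonneg_left _ hc0.le
        calc ∑' n : {n : ℤ // n ≠ k}, g (n : ℤ) ≤ ∑' n : ℤ, g n :=
              Summable.tsum_le_tsum_of_inj (Subtype.val) Subtype.val_injective
                (fun c _ => hgnn c) (fun i => le_rfl) hsub hgsum
          _ = A1 + A2 := hgtsum
    _ ≤ (A1 + A2 + 1) / π ^ 4 / (1 + (|k| : ℝ)) ^ 2 := by
        rw [div_div, hcdef]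
        rw [show (1 + (|k| : ℝ)) = x from rfl]
        rw [one_div_mul_eq_div]
        rw [div_le_div_iff_of_pos_right (mul_pos (show (0:ℝ) < π ^ 4 by positivity) (pow_pos hx0 2))]
        linarith
end

section
/- Let m ≥ 1 be an integer, t ∈ ℝ, let Q : [0,1] → Matrix m m ℂ have Lebesgue-integrable entries, and let C = ∫₀¹ Q(x) dx. Let (λ, Ψ) be an eigenpair of the quasiperiodic problem L_t(Q). Let k ∈ ℤ, μ ∈ ℂ, and let v* ∈ ℂ^m satisfy C^H v* = conj(μ) · v*, where C^H is the conjugate transpose of C. Set Φ*(x) = v* e^{i(2πk+t)x}. Then (λ − (2πk+t)² − μ) · (Ψ, Φ*) = ((Q − C)Ψ, Φ*), where (f,g) = ∫₀¹ ⟨f(x), g(x)⟩ dx and ⟨·,·⟩ is the standard inner product on ℂ^m. -/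
open MeasureTheory

noncomputable section

/-- `(λ, Ψ)` is an eigenpair of the quasiperiodic problem `L_t(Q)`:
`Ψ` is not identically zero on `[0,1]`, `Ψ` and its derivative `D` are absolutely
continuous on `[0,1]` (being integrals of `D` and of an integrable `G` respectively),
`-Ψ'' + QΨ = λΨ` a.e. on `[0,1]`, and `Ψ(1) = e^{it}Ψ(0)`, `Ψ'(1) = e^{it}Ψ'(0)`. -/
def IsEigenpair (m : ℕ) (t : ℝ) (Q : ℝ → Matrix (Fin m) (Fin m) ℂ)
    (lam : ℂ) (Ψ : ℝ → Fin m → ℂ) : Prop :=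
  (∃ x ∈ Set.Icc (0:ℝ) 1, Ψ x ≠ 0) ∧
  ∃ D G : ℝ → Fin m → ℂ,
    IntegrableOn G (Set.Icc (0:ℝ) 1) ∧
    (∀ x ∈ Set.Icc (0:ℝ) 1, Ψ x = Ψ 0 + ∫ s in (0:ℝ)..x, D s) ∧
    (∀ x ∈ Set.Icc (0:ℝ) 1, D x = D 0 + ∫ s in (0:ℝ)..x, G s) ∧
    (∀ᵐ x ∂(volume.restrict (Set.Icc (0:ℝ) 1)),
      -G x + (Q x).mulVec (Ψ x) = lam • Ψ x) ∧
    Ψ 1 = Complex.exp (Complex.I * (t : ℂ)) • Ψ 0 ∧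
    D 1 = Complex.exp (Complex.I * (t : ℂ)) • D 0

/-- The inner product `(f,g) = ∫₀¹ ⟨f(x), g(x)⟩ dx`, linear in the first argument. -/
def ip (m : ℕ) (f g : ℝ → Fin m → ℂ) : ℂ :=
  ∫ x in (0:ℝ)..1, ∑ i, f x i * (starRingEnd ℂ) (g x i)

/-- The `L²` norm on `[0,1]`. -/
def l2norm (m : ℕ) (f : ℝ → Fin m → ℂ) : ℝ :=
  Real.sqrt (∫ x in (0:ℝ)..1, ∑ i, ‖f x i‖ ^ 2)

/-- `φ_{n,s}(x) = e_s e^{i(2πn+t)x}`. -/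
def phi (m : ℕ) (t : ℝ) (n : ℤ) (s : Fin m) : ℝ → Fin m → ℂ :=
  fun x i => if i = s then Complex.exp (Complex.I * ((2*Real.pi*(n:ℝ) + t : ℝ) : ℂ) * (x : ℂ)) else 0

/-- The function `x ↦ v e^{i(2πk+t)x}`. -/
def expVec (m : ℕ) (t : ℝ) (k : ℤ) (v : Fin m → ℂ) : ℝ → Fin m → ℂ :=
  fun x i => v i * Complex.exp (Complex.I * ((2*Real.pi*(k:ℝ) + t : ℝ) : ℂ) * (x : ℂ))

/-- `C = ∫₀¹ Q(x) dx`, entrywise. -/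
def Cmat (m : ℕ) (Q : ℝ → Matrix (Fin m) (Fin m) ℂ) : Matrix (Fin m) (Fin m) ℂ :=
  Matrix.of fun i j => ∫ x in (0:ℝ)..1, Q x i j

end


namespace EPaux
open MeasureTheory Set

lemma ftc_exp (c : ℂ) (s b : ℝ) :
    ∫ x in s..b, c * Complex.exp (c * x) = Complex.exp (c * b) - Complex.exp (c * s) := by
  have hd : ∀ x : ℝ, HasDerivAt (fun y : ℝ => Complex.exp (c * y)) (c * Complex.exp (c * x)) x := by
    intro x
    have h1 : HasDerivAt (fun y : ℝ => (c * y : ℂ)) c x := by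
      simpa using (Complex.ofRealCLM.hasDerivAt (x := x)).const_mul c
    simpa [mul_comm, Function.comp_def] using (Complex.hasDerivAt_exp (c * x)).comp x h1
  exact intervalIntegral.integral_eq_sub_of_hasDerivAt (fun x _ => hd x)
    ((Continuous.intervalIntegrable (by fun_prop) _ _))

lemma fub (c : ℂ) (g : ℝ → ℂ) (hg : IntegrableOn g (Set.Icc 0 1)) :
    ∫ x in (0:ℝ)..1, (∫ s in (0:ℝ)..x, g s) * (c * Complex.exp (c * x))
      = ∫ s in (0:ℝ)..1, g s * (Complex.exp c - Complex.exp (c * s)) := by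
  have hg' : IntegrableOn g (Set.Ioc 0 1) := hg.mono_set Ioc_subset_Icc_self
  set μ := volume.restrict (Set.Ioc (0:ℝ) 1) with hμ
  have hgμ : Integrable g μ := hg'
  have hh : Integrable (fun x : ℝ => c * Complex.exp (c * x)) μ :=
    (Continuous.integrableOn_Ioc (by fun_prop))
  set F : ℝ × ℝ → ℂ := fun p => if p.2 ≤ p.1 then g p.2 * (c * Complex.exp (c * p.1)) else 0 with hF
  have hFeq : F = Set.indicator {p : ℝ × ℝ | p.2 ≤ p.1}
      (fun p => (c * Complex.exp (c * p.1)) * g p.2) := by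
    funext p
    by_cases hp : p.2 ≤ p.1 <;> simp [hF, Set.indicator_apply, hp, mul_comm]
  have hFint : Integrable F (μ.prod μ) := by
    rw [hFeq]
    exact (Integrable.mul_prod hh hgμ).indicator
      (isClosed_le continuous_snd continuous_fst).measurableSet
  have swap := MeasureTheory.integral_integral_swap (f := fun x s => F (x, s)) (μ := μ) (ν := μ)
    (by exact hFint)
  have hL : (∫ x in (0:ℝ)..1, (∫ s in (0:ℝ)..x, g s) * (c * Complex.exp (c * x)))
      = ∫ x, (∫ s, F (x, s) ∂μ) ∂μ := by
    rw [intervalIntegral.integral_of_le zero_le_one]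
    refine setIntegral_congr_fun measurableSet_Ioc (fun x hx => ?_)
    have h1 : (∫ s, F (x, s) ∂μ) = (∫ s in (0:ℝ)..x, g s) * (c * Complex.exp (c * x)) := by
      have he : ∀ s, F (x, s)
          = Set.indicator (Set.Iic x) (fun s => g s * (c * Complex.exp (c * x))) s := by
        intro s; by_cases h : s ≤ x <;> simp [hF, h, Set.indicator_apply]
      rw [show (fun s => F (x, s)) = _ from funext he, hμ,
        integral_indicator measurableSet_Iic,
        Measure.restrict_restrict measurableSet_Iic]
      have hset : Set.Iic x ∩ Set.Ioc 0 1 = Set.Ioc 0 x := by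
        ext y
        constructor
        · rintro ⟨hyx, hy0, _⟩; exact ⟨hy0, hyx⟩
        · rintro ⟨hy0, hyx⟩; exact ⟨hyx, hy0, hyx.trans hx.2⟩
      rw [hset, ← intervalIntegral.integral_of_le hx.1.le, intervalIntegral.integral_mul_const]
    exact h1.symm
  have hR : (∫ s, (∫ x, F (x, s) ∂μ) ∂μ)
      = ∫ s in (0:ℝ)..1, g s * (Complex.exp c - Complex.exp (c * s)) := by
    rw [intervalIntegral.integral_of_le zero_le_one]
    refine setIntegral_congr_fun measurableSet_Ioc (fun s hs => ?_)
    have he : ∀ x, F (x, s)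
        = Set.indicator (Set.Ici s) (fun x => g s * (c * Complex.exp (c * x))) x := by
      intro x; by_cases h : s ≤ x <;> simp [hF, h, Set.indicator_apply]
    rw [show (fun x => F (x, s)) = _ from funext he]
    rw [hμ, integral_indicator measurableSet_Ici]
    have hset : Set.Ioc (0:ℝ) 1 ∩ Set.Ici s = Set.Icc s 1 := by
      ext x
      constructor
      · rintro ⟨⟨_, hx1⟩, hxs⟩; exact ⟨hxs, hx1⟩
      · rintro ⟨hxs, hx1⟩; exact ⟨⟨lt_of_lt_of_le hs.1 hxs, hx1⟩, hxs⟩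
    have hset2 : Set.Ici s ∩ Set.Ioc 0 1 = Set.Icc s 1 := by
      rw [Set.inter_comm]; exact hset
    rw [Measure.restrict_restrict measurableSet_Ici, hset2, integral_Icc_eq_integral_Ioc,
      ← intervalIntegral.integral_of_le hs.2,
      intervalIntegral.integral_const_mul, ftc_exp]
    norm_num
  rw [hL, swap, hR]

lemma parts (c : ℂ) (g F : ℝ → ℂ) (hg : IntegrableOn g (Set.Icc 0 1))
    (hF : ∀ x ∈ Set.Icc (0:ℝ) 1, F x = F 0 + ∫ s in (0:ℝ)..x, g s) :
    ∫ x in (0:ℝ)..1, F x * (c * Complex.exp (c * x))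
      = F 1 * Complex.exp c - F 0 - ∫ x in (0:ℝ)..1, g x * Complex.exp (c * x) := by
  have hgi : IntervalIntegrable g volume 0 1 := by
    rw [intervalIntegrable_iff_integrableOn_Ioc_of_le zero_le_one]
    exact hg.mono_set Set.Ioc_subset_Icc_self
  have hprim : ContinuousOn (fun x => ∫ s in (0:ℝ)..x, g s) (Set.Icc 0 1) := by
    rw [show Set.Icc (0:ℝ) 1 = Set.uIcc 0 1 from (Set.uIcc_of_le zero_le_one).symm]
    exact intervalIntegral.continuousOn_primitive_interval (by rwa [Set.uIcc_of_le zero_le_one])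
  have h1 : (∫ x in (0:ℝ)..1, F x * (c * Complex.exp (c * x)))
      = ∫ x in (0:ℝ)..1, (F 0 + ∫ s in (0:ℝ)..x, g s) * (c * Complex.exp (c * x)) := by
    apply intervalIntegral.integral_congr
    intro x hx
    rw [Set.uIcc_of_le zero_le_one] at hx
    simp only []
    rw [hF x hx]
  have hi1 : IntervalIntegrable (fun x => F 0 * (c * Complex.exp (c * x))) volume 0 1 :=
    (Continuous.intervalIntegrable (by fun_prop) _ _)
  have hi2 : IntervalIntegrable (fun x => (∫ s in (0:ℝ)..x, g s) * (c * Complex.exp (c * x)))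
      volume 0 1 := by
    apply ContinuousOn.intervalIntegrable
    rw [Set.uIcc_of_le zero_le_one]
    exact hprim.mul (Continuous.continuousOn (by fun_prop))
  have h2 : (∫ x in (0:ℝ)..1, (F 0 + ∫ s in (0:ℝ)..x, g s) * (c * Complex.exp (c * x)))
      = (∫ x in (0:ℝ)..1, F 0 * (c * Complex.exp (c * x)))
        + ∫ x in (0:ℝ)..1, (∫ s in (0:ℝ)..x, g s) * (c * Complex.exp (c * x)) := by
    rw [← intervalIntegral.integral_add hi1 hi2]
    congr 1; funext x; ring
  have h3 : (∫ x in (0:ℝ)..1, F 0 * (c * Complex.exp (c * x)))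
      = F 0 * (Complex.exp c - 1) := by
    rw [intervalIntegral.integral_const_mul, ftc_exp]
    norm_num
  have hgexp : IntervalIntegrable (fun x => g x * Complex.exp (c * x)) volume 0 1 :=
    hgi.mul_continuousOn (Continuous.continuousOn
      (Complex.continuous_exp.comp (continuous_const.mul Complex.continuous_ofReal)))
  have h4 : (∫ s in (0:ℝ)..1, g s * (Complex.exp c - Complex.exp (c * s)))
      = (∫ s in (0:ℝ)..1, g s) * Complex.exp c
        - ∫ s in (0:ℝ)..1, g s * Complex.exp (c * s) := by
    rw [← intervalIntegral.integral_mul_const, ← intervalIntegral.integral_sub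
      (hgi.mul_const _) hgexp]
    congr 1; funext s; ring
  have hF1 : F 1 = F 0 + ∫ s in (0:ℝ)..1, g s := hF 1 (by norm_num)
  rw [h1, h2, h3, fub c g hg, h4, hF1]
  ring

lemma key (c : ℂ) (u d g : ℝ → ℂ) (hg : IntegrableOn g (Set.Icc 0 1))
    (hd : ∀ x ∈ Set.Icc (0:ℝ) 1, d x = d 0 + ∫ s in (0:ℝ)..x, g s)
    (hu : ∀ x ∈ Set.Icc (0:ℝ) 1, u x = u 0 + ∫ s in (0:ℝ)..x, d s)
    (bu : Complex.exp c * u 1 = u 0) (bd : Complex.exp c * d 1 = d 0) :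
    ∫ x in (0:ℝ)..1, g x * Complex.exp (c * x)
      = c ^ 2 * ∫ x in (0:ℝ)..1, u x * Complex.exp (c * x) := by
  have hdc : ContinuousOn d (Set.Icc 0 1) := by
    have : ContinuousOn (fun x => d 0 + ∫ s in (0:ℝ)..x, g s) (Set.Icc 0 1) := by
      rw [show Set.Icc (0:ℝ) 1 = Set.uIcc 0 1 from (Set.uIcc_of_le zero_le_one).symm]
      exact continuousOn_const.add (intervalIntegral.continuousOn_primitive_interval
        (by rwa [Set.uIcc_of_le zero_le_one]))
    exact this.congr hd
  have hdint : IntegrableOn d (Set.Icc 0 1) :=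
    (hdc.integrableOn_compact isCompact_Icc)
  have p1 := parts c g d hg hd
  have p2 := parts c d u hdint hu
  -- rewrite ∫ d x * (c * e^{cx}) = c * ∫ d x * e^{cx}
  have e1 : (∫ x in (0:ℝ)..1, d x * (c * Complex.exp (c * x)))
      = c * ∫ x in (0:ℝ)..1, d x * Complex.exp (c * x) := by
    rw [← intervalIntegral.integral_const_mul]
    congr 1; funext x; ring
  have e2 : (∫ x in (0:ℝ)..1, u x * (c * Complex.exp (c * x)))
      = c * ∫ x in (0:ℝ)..1, u x * Complex.exp (c * x) := by
    rw [← intervalIntegral.integral_const_mul]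
    congr 1; funext x; ring
  rw [e1] at p1
  rw [e2] at p2
  -- from p2 : c * ∫ u e = u 1 e^c - u 0 - ∫ d e, and bu : e^c u 1 = u 0
  -- so ∫ d e = -c ∫ u e
  have q2 : (∫ x in (0:ℝ)..1, d x * Complex.exp (c * x))
      = -c * ∫ x in (0:ℝ)..1, u x * Complex.exp (c * x) := by
    have := p2
    rw [mul_comm (u 1) (Complex.exp c)] at this
    rw [bu] at this
    linear_combination this
  have q1 : (∫ x in (0:ℝ)..1, g x * Complex.exp (c * x))
      = -c * ∫ x in (0:ℝ)..1, d x * Complex.exp (c * x) := by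
    have := p1
    rw [mul_comm (d 1) (Complex.exp c)] at this
    rw [bd] at this
    linear_combination this
  rw [q1, q2]; ring

end EPaux

/-- If `(λ, Ψ)` is an eigenpair of `L_t(Q)`, `C = ∫₀¹ Q`, `Cᴴ v* = conj(μ) v*`, and
`Φ*(x) = v* e^{i(2πk+t)x}`, then `(λ − (2πk+t)² − μ)(Ψ, Φ*) = ((Q−C)Ψ, Φ*)`. -/
theorem eigenpair_perturbation_identity (m : ℕ) (hm : 1 ≤ m) (t : ℝ)
    (Q : ℝ → Matrix (Fin m) (Fin m) ℂ)
    (hQ : ∀ i j, MeasureTheory.IntegrableOn (fun x => Q x i j) (Set.Icc (0:ℝ) 1))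
    (lam : ℂ) (Ψ : ℝ → Fin m → ℂ) (h : IsEigenpair m t Q lam Ψ)
    (k : ℤ) (μ : ℂ) (vst : Fin m → ℂ)
    (hv : (Matrix.conjTranspose (Cmat m Q)).mulVec vst = (starRingEnd ℂ) μ • vst) :
    (lam - (((2 * Real.pi * (k : ℝ) + t) ^ 2 : ℝ) : ℂ) - μ) * ip m Ψ (expVec m t k vst)
      = ip m (fun x => (Q x - Cmat m Q).mulVec (Ψ x)) (expVec m t k vst) := by
  classical
  obtain ⟨-, D, G, hG, hΨ, hD, hODE, hb1, hb2⟩ := h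
  set θ : ℝ := 2 * Real.pi * (k : ℝ) + t with hθ
  set c : ℂ := -(Complex.I * (θ : ℂ)) with hc
  set w : Fin m → ℂ := fun i => (starRingEnd ℂ) (vst i) with hw
  set u : ℝ → ℂ := fun x => ∑ i, Ψ x i * w i with hu
  set d : ℝ → ℂ := fun x => ∑ i, D x i * w i with hdd
  set g : ℝ → ℂ := fun x => ∑ i, G x i * w i with hgg
  have hexp : ∀ x : ℝ, (starRingEnd ℂ) (Complex.exp (Complex.I * (θ : ℂ) * (x : ℂ)))
      = Complex.exp (c * x) := by
    intro x
    rw [← Complex.exp_conj]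
    congr 1
    simp [hc, Complex.conj_I]
    try ring
  -- helper: integrability on subintervals
  have subII : ∀ {f : ℝ → ℂ}, IntegrableOn f (Set.Icc 0 1) → ∀ x ∈ Set.Icc (0:ℝ) 1,
      IntervalIntegrable f volume 0 x := by
    intro f hf x hx
    rw [intervalIntegrable_iff_integrableOn_Ioc_of_le hx.1]
    exact hf.mono_set (fun y hy => ⟨le_of_lt hy.1, hy.2.trans hx.2⟩)
  have subIIp : ∀ {f : ℝ → Fin m → ℂ}, IntegrableOn f (Set.Icc 0 1) → ∀ x ∈ Set.Icc (0:ℝ) 1,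
      IntervalIntegrable f volume 0 x := by
    intro f hf x hx
    rw [intervalIntegrable_iff_integrableOn_Ioc_of_le hx.1]
    exact hf.mono_set (fun y hy => ⟨le_of_lt hy.1, hy.2.trans hx.2⟩)
  -- component integrability of G and the function g
  have hGi : ∀ i, IntegrableOn (fun x => G x i) (Set.Icc (0:ℝ) 1) := fun i =>
    (ContinuousLinearMap.proj (R := ℂ) (φ := fun _ : Fin m => ℂ) i).integrable_comp hG
  have hgint : IntegrableOn g (Set.Icc (0:ℝ) 1) := by
    apply MeasureTheory.integrable_finset_sum
    intro i _
    exact (hGi i).mul_const _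
  -- d is a primitive of g
  have hd' : ∀ x ∈ Set.Icc (0:ℝ) 1, d x = d 0 + ∫ s in (0:ℝ)..x, g s := by
    intro x hx
    have hDx := hD x hx
    have happ : ∀ i, (∫ s in (0:ℝ)..x, G s) i = ∫ s in (0:ℝ)..x, G s i := fun i =>
      (ContinuousLinearMap.intervalIntegral_comp_comm
        (ContinuousLinearMap.proj (R := ℂ) (φ := fun _ : Fin m => ℂ) i)
        (subIIp hG x hx)).symm
    calc d x = ∑ i, (D 0 i + (∫ s in (0:ℝ)..x, G s) i) * w i := by
          rw [hdd]; simp only [hDx]; rfl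
      _ = d 0 + ∑ i, (∫ s in (0:ℝ)..x, G s i) * w i := by
          rw [Finset.sum_congr rfl (fun i _ => by rw [happ i])]
          rw [hdd]
          simp [add_mul, Finset.sum_add_distrib]
      _ = d 0 + ∑ i, ∫ s in (0:ℝ)..x, G s i * w i := by
          rw [Finset.sum_congr rfl (fun i _ => (intervalIntegral.integral_mul_const _ _).symm)]
      _ = d 0 + ∫ s in (0:ℝ)..x, g s := by
          rw [← intervalIntegral.integral_finset_sum]
          intro i _
          exact (subII (hGi i) x hx).mul_const _
  -- D is continuous hence integrable on [0,1]
  have hDcont : ContinuousOn D (Set.Icc (0:ℝ) 1) := by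
    have h2 : ContinuousOn (fun x => D 0 + ∫ s in (0:ℝ)..x, G s) (Set.Icc (0:ℝ) 1) := by
      rw [show Set.Icc (0:ℝ) 1 = Set.uIcc 0 1 from (Set.uIcc_of_le zero_le_one).symm]
      exact continuousOn_const.add (intervalIntegral.continuousOn_primitive_interval
        (by rwa [Set.uIcc_of_le zero_le_one]))
    exact h2.congr hD
  have hDint : IntegrableOn D (Set.Icc (0:ℝ) 1) := hDcont.integrableOn_compact isCompact_Icc
  have hDi : ∀ i, IntegrableOn (fun x => D x i) (Set.Icc (0:ℝ) 1) := fun i =>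
    (ContinuousLinearMap.proj (R := ℂ) (φ := fun _ : Fin m => ℂ) i).integrable_comp hDint
  have hdint : IntegrableOn d (Set.Icc (0:ℝ) 1) := by
    apply MeasureTheory.integrable_finset_sum
    intro i _
    exact (hDi i).mul_const _
  -- u is a primitive of d
  have hu' : ∀ x ∈ Set.Icc (0:ℝ) 1, u x = u 0 + ∫ s in (0:ℝ)..x, d s := by
    intro x hx
    have hΨx := hΨ x hx
    have happ : ∀ i, (∫ s in (0:ℝ)..x, D s) i = ∫ s in (0:ℝ)..x, D s i := fun i =>
      (ContinuousLinearMap.intervalIntegral_comp_comm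
        (ContinuousLinearMap.proj (R := ℂ) (φ := fun _ : Fin m => ℂ) i)
        (subIIp hDint x hx)).symm
    calc u x = ∑ i, (Ψ 0 i + (∫ s in (0:ℝ)..x, D s) i) * w i := by
          rw [hu]; simp only [hΨx]; rfl
      _ = u 0 + ∑ i, (∫ s in (0:ℝ)..x, D s i) * w i := by
          rw [Finset.sum_congr rfl (fun i _ => by rw [happ i])]
          rw [hu]
          simp [add_mul, Finset.sum_add_distrib]
      _ = u 0 + ∑ i, ∫ s in (0:ℝ)..x, D s i * w i := by
          rw [Finset.sum_congr rfl (fun i _ => (intervalIntegral.integral_mul_const _ _).symm)]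
      _ = u 0 + ∫ s in (0:ℝ)..x, d s := by
          rw [← intervalIntegral.integral_finset_sum]
          intro i _
          exact (subII (hDi i) x hx).mul_const _
  -- boundary conditions
  have hone : Complex.exp c * Complex.exp (Complex.I * (t : ℂ)) = 1 := by
    rw [← Complex.exp_add]
    have : c + Complex.I * (t : ℂ) = (-k : ℤ) * (2 * (Real.pi : ℂ) * Complex.I) := by
      rw [hc, hθ]
      push_cast
      ring
    rw [this, Complex.exp_int_mul_two_pi_mul_I]
  have bu : Complex.exp c * u 1 = u 0 := by
    rw [hu]
    simp only [hb1, Pi.smul_apply, smul_eq_mul, Finset.mul_sum]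
    refine Finset.sum_congr rfl (fun i _ => ?_)
    rw [show Complex.exp c * (Complex.exp (Complex.I * (t:ℂ)) * Ψ 0 i * w i)
      = (Complex.exp c * Complex.exp (Complex.I * (t:ℂ))) * (Ψ 0 i * w i) from by ring,
      hone, one_mul]
  have bd : Complex.exp c * d 1 = d 0 := by
    rw [hdd]
    simp only [hb2, Pi.smul_apply, smul_eq_mul, Finset.mul_sum]
    refine Finset.sum_congr rfl (fun i _ => ?_)
    rw [show Complex.exp c * (Complex.exp (Complex.I * (t:ℂ)) * D 0 i * w i)
      = (Complex.exp c * Complex.exp (Complex.I * (t:ℂ))) * (D 0 i * w i) from by ring,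
      hone, one_mul]
  have hkey := EPaux.key c u d g hgint hd' hu' bu bd
  -- continuity of Ψ and u
  have hΨcont : ContinuousOn Ψ (Set.Icc (0:ℝ) 1) := by
    have h2 : ContinuousOn (fun x => Ψ 0 + ∫ s in (0:ℝ)..x, D s) (Set.Icc (0:ℝ) 1) := by
      rw [show Set.Icc (0:ℝ) 1 = Set.uIcc 0 1 from (Set.uIcc_of_le zero_le_one).symm]
      exact continuousOn_const.add (intervalIntegral.continuousOn_primitive_interval
        (by rwa [Set.uIcc_of_le zero_le_one]))
    exact h2.congr hΨ
  have hΨicont : ∀ i, ContinuousOn (fun x => Ψ x i) (Set.Icc (0:ℝ) 1) := fun i =>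
    (continuous_apply i).comp_continuousOn hΨcont
  have hucont : ContinuousOn u (Set.Icc (0:ℝ) 1) := by
    rw [hu]
    exact continuousOn_finset_sum _ (fun i _ => (hΨicont i).mul continuousOn_const)
  have hecont : Continuous fun x : ℝ => Complex.exp (c * x) :=
    Complex.continuous_exp.comp (continuous_const.mul Complex.continuous_ofReal)
  set A : ℂ := ∫ x in (0:ℝ)..1, u x * Complex.exp (c * x) with hA
  set v : ℝ → ℂ := fun x => ∑ i, ((Q x).mulVec (Ψ x)) i * w i with hvv
  set B : ℂ := ∫ x in (0:ℝ)..1, v x * Complex.exp (c * x) with hB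
  -- identify ip Ψ Φ* with A
  have ipPsi : ip m Ψ (expVec m t k vst) = A := by
    rw [ip, hA]
    apply intervalIntegral.integral_congr
    intro x _
    simp only [expVec]
    calc ∑ i, Ψ x i * (starRingEnd ℂ) (vst i * Complex.exp (Complex.I * (θ:ℂ) * (x:ℂ)))
        = ∑ i, Ψ x i * w i * Complex.exp (c * x) := by
          refine Finset.sum_congr rfl (fun i _ => ?_)
          rw [map_mul, hexp x]
          ring
      _ = u x * Complex.exp (c * x) := by rw [hu, Finset.sum_mul]
  -- integrability of v and related
  have hvint : IntegrableOn v (Set.Icc (0:ℝ) 1) := by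
    rw [hvv]
    apply MeasureTheory.integrable_finset_sum
    intro i _
    have : IntegrableOn (fun x => ((Q x).mulVec (Ψ x)) i) (Set.Icc (0:ℝ) 1) := by
      simp only [Matrix.mulVec, dotProduct]
      apply MeasureTheory.integrable_finset_sum
      intro j _
      exact (hQ i j).mul_continuousOn (hΨicont j) isCompact_Icc
    exact this.mul_const _
  have hvII : IntervalIntegrable (fun x => v x * Complex.exp (c * x)) volume 0 1 :=
    subII ((hvint.mul_continuousOn hecont.continuousOn isCompact_Icc)) 1 (by norm_num)
  have huII : IntervalIntegrable (fun x => u x * Complex.exp (c * x)) volume 0 1 := by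
    apply ContinuousOn.intervalIntegrable
    rw [Set.uIcc_of_le zero_le_one]
    exact hucont.mul hecont.continuousOn
  -- the a.e. ODE identity
  have hODE' : ∀ᵐ x ∂(volume.restrict (Set.Ioc (0:ℝ) 1)),
      -G x + (Q x).mulVec (Ψ x) = lam • Ψ x :=
    ae_restrict_of_ae_restrict_of_subset Set.Ioc_subset_Icc_self hODE
  have hae : ∀ᵐ x ∂(volume : Measure ℝ), x ∈ Set.uIoc (0:ℝ) 1 →
      g x * Complex.exp (c * x)
        = v x * Complex.exp (c * x) - lam * (u x * Complex.exp (c * x)) := by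
    rw [Set.uIoc_of_le zero_le_one]
    rw [MeasureTheory.ae_restrict_iff' measurableSet_Ioc] at hODE'
    filter_upwards [hODE'] with x hx hxmem
    have h0 := hx hxmem
    have hGx : ∀ i, G x i = ((Q x).mulVec (Ψ x)) i - lam * Ψ x i := by
      intro i
      have := congrFun h0 i
      simp only [Pi.add_apply, Pi.neg_apply, Pi.smul_apply, smul_eq_mul] at this
      linear_combination -this
    have hgx : g x = v x - lam * u x := by
      rw [hgg, hvv, hu]
      simp only [hGx]
      rw [Finset.sum_congr rfl (fun i _ => by ring :
        ∀ i ∈ Finset.univ, ((Q x).mulVec (Ψ x) i - lam * Ψ x i) * w i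
          = (Q x).mulVec (Ψ x) i * w i - lam * (Ψ x i * w i))]
      rw [Finset.sum_sub_distrib, ← Finset.mul_sum]
    rw [hgx]
    ring
  -- integral of g e^{cx}
  have step1 : (∫ x in (0:ℝ)..1, g x * Complex.exp (c * x)) = B - lam * A := by
    rw [intervalIntegral.integral_congr_ae hae, intervalIntegral.integral_sub hvII
      (huII.const_mul lam), intervalIntegral.integral_const_mul, ← hB, ← hA]
  have hBA : B = (lam + c ^ 2) * A := by
    rw [hkey] at step1
    linear_combination -step1
  -- the eigenvector identity for C, conjugated
  have hCw : ∀ j, (∑ i, Cmat m Q i j * w i) = μ * w j := by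
    intro j
    have h0 := congrFun hv j
    simp only [Matrix.mulVec, dotProduct, Matrix.conjTranspose_apply,
      Pi.smul_apply, smul_eq_mul] at h0
    have h1 := congrArg (starRingEnd ℂ) h0
    simpa [map_sum, map_mul, hw] using h1
  have hCu : ∀ x : ℝ, (∑ i, ((Cmat m Q).mulVec (Ψ x)) i * w i) = μ * u x := by
    intro x
    simp only [Matrix.mulVec, dotProduct]
    calc (∑ i, (∑ j, Cmat m Q i j * Ψ x j) * w i)
        = ∑ i, ∑ j, Ψ x j * (Cmat m Q i j * w i) := by
          refine Finset.sum_congr rfl (fun i _ => ?_)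
          rw [Finset.sum_mul]
          exact Finset.sum_congr rfl (fun j _ => by ring)
      _ = ∑ j, Ψ x j * ∑ i, Cmat m Q i j * w i := by
          rw [Finset.sum_comm]
          exact Finset.sum_congr rfl (fun j _ => by rw [Finset.mul_sum])
      _ = μ * u x := by
          rw [Finset.sum_congr rfl (fun j _ => by rw [hCw j])]
          rw [hu, Finset.mul_sum]
          exact Finset.sum_congr rfl (fun j _ => by ring)
  -- identify the RHS of the goal
  have hRHS : ip m (fun x => (Q x - Cmat m Q).mulVec (Ψ x)) (expVec m t k vst)
      = B - μ * A := by
    have hmu : IntervalIntegrable (fun x => μ * (u x * Complex.exp (c * x))) volume 0 1 :=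
      huII.const_mul μ
    have : ip m (fun x => (Q x - Cmat m Q).mulVec (Ψ x)) (expVec m t k vst)
        = ∫ x in (0:ℝ)..1, (v x * Complex.exp (c * x) - μ * (u x * Complex.exp (c * x))) := by
      rw [ip]
      apply intervalIntegral.integral_congr
      intro x _
      simp only [expVec]
      calc ∑ i, ((Q x - Cmat m Q).mulVec (Ψ x)) i
            * (starRingEnd ℂ) (vst i * Complex.exp (Complex.I * (θ:ℂ) * (x:ℂ)))
          = ∑ i, (((Q x).mulVec (Ψ x)) i - ((Cmat m Q).mulVec (Ψ x)) i) * w i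
            * Complex.exp (c * x) := by
            refine Finset.sum_congr rfl (fun i _ => ?_)
            rw [map_mul, hexp x, Matrix.sub_mulVec]
            simp only [Pi.sub_apply]
            ring
        _ = (v x - μ * u x) * Complex.exp (c * x) := by
            rw [hvv, ← hCu x, ← Finset.sum_sub_distrib, Finset.sum_mul]
            exact Finset.sum_congr rfl (fun i _ => by ring)
        _ = v x * Complex.exp (c * x) - μ * (u x * Complex.exp (c * x)) := by ring
    rw [this, intervalIntegral.integral_sub hvII hmu, intervalIntegral.integral_const_mul,
      ← hB, ← hA]
  have hc2 : c ^ 2 = -((θ ^ 2 : ℝ) : ℂ) := by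
    have : c ^ 2 = Complex.I ^ 2 * (θ : ℂ) ^ 2 := by rw [hc]; ring
    rw [this, Complex.I_sq]
    push_cast
    ring
  rw [ipPsi, hRHS, hBA, hc2]
  push_cast
  ring
end

section
/- Let m ≥ 1 be an integer, t ∈ ℝ, let Q : [0,1] → Matrix m m ℂ have Lebesgue-integrable entries, and let C = ∫₀¹ Q(x) dx. Let (λ, Ψ) be an eigenpair of the quasiperiodic problem L_t(Q). Let k ∈ ℤ, μ ∈ ℂ, s ∈ ℕ, and let v*_0, v*_1, …, v*_s ∈ ℂ^m satisfy (C^H − conj(μ)·I) v*_0 = 0 and (C^H − conj(μ)·I) v*_p = v*_{p−1} for p = 1, …, s, where C^H is the conjugate transpose of C. Set μ_k = (2πk+t)² + μ and Φ*_p(x) = v*_p e^{i(2πk+t)x}. Then (λ − μ_k)^{s+1} · (Ψ, Φ*_s) = ∑_{p=0}^{s} (λ − μ_k)^p · ((Q − C)Ψ, Φ*_p), where (f,g) = ∫₀¹ ⟨f(x), g(x)⟩ dx and ⟨·,·⟩ is the standard inner product on ℂ^m. -/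
open MeasureTheory

namespace EigenAux
open MeasureTheory Set


lemma swap_tri (g h : ℝ → ℂ) (hg : IntegrableOn g (Set.Ioc (0:ℝ) 1)) (hh : Continuous h) :
    ∫ x in Set.Ioc (0:ℝ) 1, (∫ u in Set.Ioc (0:ℝ) x, g u) * h x
      = ∫ u in Set.Ioc (0:ℝ) 1, g u * (∫ x in Set.Ioc u 1, h x) := by
  set μ := volume.restrict (Set.Ioc (0:ℝ) 1) with hμ
  have hsmeas : MeasurableSet {p : ℝ × ℝ | p.2 ≤ p.1} :=
    measurableSet_le measurable_snd measurable_fst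
  set F : ℝ × ℝ → ℂ := fun p => Set.indicator {p : ℝ × ℝ | p.2 ≤ p.1}
    (fun p => g p.2 * h p.1) p with hF
  have hh' : Integrable h μ := hh.integrableOn_Ioc
  have hbase : Integrable (fun p : ℝ × ℝ => g p.2 * h p.1) (μ.prod μ) := by
    have := hh'.mul_prod (show Integrable g μ from hg)
    simpa [mul_comm] using this
  have hFint : Integrable F (μ.prod μ) := hbase.indicator hsmeas
  have hswap := MeasureTheory.integral_integral_swap (f := fun x u => F (x, u))
    (μ := μ) (ν := μ) (by exact hFint)
  have hIoc : MeasurableSet (Set.Ioc (0:ℝ) 1) := measurableSet_Ioc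
  have hL : ∫ x, (∫ u, F (x, u) ∂μ) ∂μ
      = ∫ x in Set.Ioc (0:ℝ) 1, (∫ u in Set.Ioc (0:ℝ) x, g u) * h x := by
    rw [hμ]
    refine setIntegral_congr_fun hIoc (fun x hx => ?_)
    have hfx : (fun u => F (x, u)) = Set.indicator (Set.Iic x) (fun u => g u * h x) := by
      funext u
      simp only [hF, Set.indicator_apply, Set.mem_setOf_eq, Set.mem_Iic]
    rw [hfx, integral_indicator measurableSet_Iic, Measure.restrict_restrict measurableSet_Iic]
    have : Set.Iic x ∩ Set.Ioc (0:ℝ) 1 = Set.Ioc 0 x := by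
      ext u; simp only [Set.mem_inter_iff, Set.mem_Iic, Set.mem_Ioc]
      constructor
      · rintro ⟨h1, h2, h3⟩; exact ⟨h2, h1⟩
      · rintro ⟨h1, h2⟩; exact ⟨h2, h1, h2.trans hx.2⟩
    rw [this, integral_mul_const]
  have hR : ∫ u, (∫ x, F (x, u) ∂μ) ∂μ
      = ∫ u in Set.Ioc (0:ℝ) 1, g u * (∫ x in Set.Ioc u 1, h x) := by
    rw [hμ]
    refine setIntegral_congr_fun hIoc (fun u hu => ?_)
    have hfx : (fun x => F (x, u)) = Set.indicator (Set.Ici u) (fun x => g u * h x) := by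
      funext x
      simp only [hF, Set.indicator_apply, Set.mem_setOf_eq, Set.mem_Ici]
    rw [hfx, integral_indicator measurableSet_Ici, Measure.restrict_restrict measurableSet_Ici]
    have : Set.Ici u ∩ Set.Ioc (0:ℝ) 1 = Set.Icc u 1 := by
      ext x; simp only [Set.mem_inter_iff, Set.mem_Ici, Set.mem_Ioc, Set.mem_Icc]
      constructor
      · rintro ⟨h1, _, h3⟩; exact ⟨h1, h3⟩
      · rintro ⟨h1, h2⟩; exact ⟨h1, lt_of_lt_of_le hu.1 h1, h2⟩
    rw [this, integral_Icc_eq_integral_Ioc, integral_const_mul]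
  rw [← hL, ← hR] at *
  exact hswap

lemma expDeriv (c : ℂ) (x : ℝ) :
    HasDerivAt (fun y : ℝ => Complex.exp (c * y)) (c * Complex.exp (c * x)) x := by
  have h1 : HasDerivAt (fun z : ℂ => Complex.exp (c * z)) (c * Complex.exp (c * x)) (x : ℂ) := by
    have := ((hasDerivAt_id (x:ℂ)).const_mul c).cexp
    simp only [id_eq, mul_one] at this
    exact this.congr_deriv (mul_comm _ _)
  exact h1.comp_ofReal

lemma expCont (c : ℂ) : Continuous fun x : ℝ => Complex.exp (c * x) :=
  Complex.continuous_exp.comp (continuous_const.mul Complex.continuous_ofReal)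

lemma expInt (c : ℂ) (u : ℝ) (hu : u ≤ 1) :
    ∫ x in u..(1:ℝ), c * Complex.exp (c * x) = Complex.exp c - Complex.exp (c * u) := by
  have := intervalIntegral.integral_eq_sub_of_hasDerivAt
    (f := fun y : ℝ => Complex.exp (c * y)) (f' := fun y : ℝ => c * Complex.exp (c * y))
    (a := u) (b := 1) (fun x _ => expDeriv c x)
    ((continuous_const.mul (expCont c)).intervalIntegrable u 1)
  simpa using this

lemma parts (g : ℝ → ℂ) (hg : IntegrableOn g (Set.Icc (0:ℝ) 1)) (d : ℝ → ℂ)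
    (hd : ∀ x ∈ Set.Icc (0:ℝ) 1, d x = d 0 + ∫ u in (0:ℝ)..x, g u) (c : ℂ) :
    ∫ x in (0:ℝ)..1, g x * Complex.exp (c * x)
      = d 1 * Complex.exp c - d 0 - c * ∫ x in (0:ℝ)..1, d x * Complex.exp (c * x) := by
  have huIcc : Set.uIcc (0:ℝ) 1 = Set.Icc 0 1 := Set.uIcc_of_le zero_le_one
  have hgI : IntervalIntegrable g volume 0 1 := by
    apply IntegrableOn.intervalIntegrable; rw [huIcc]; exact hg
  have prim_cont : ContinuousOn (fun x => ∫ u in (0:ℝ)..x, g u) (Set.Icc 0 1) := by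
    have := intervalIntegral.continuousOn_primitive_interval (a := (0:ℝ)) (b := 1)
      (μ := volume) (f := g) (by rw [huIcc]; exact hg)
    rwa [huIcc] at this
  -- step 1: rewrite ∫ d·c e^{cx}
  have hsplit : c * ∫ x in (0:ℝ)..1, d x * Complex.exp (c * x)
      = d 0 * (Complex.exp c - 1)
        + ∫ x in (0:ℝ)..1, (∫ u in (0:ℝ)..x, g u) * (c * Complex.exp (c * x)) := by
    have e1 : ∫ x in (0:ℝ)..1, d x * Complex.exp (c * x)
        = ∫ x in (0:ℝ)..1, (d 0 + ∫ u in (0:ℝ)..x, g u) * Complex.exp (c * x) := by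
      refine intervalIntegral.integral_congr (fun x hx => ?_)
      rw [huIcc] at hx; rw [hd x hx]
    have i1 : IntervalIntegrable (fun x : ℝ => d 0 * Complex.exp (c * x)) volume 0 1 :=
      (continuous_const.mul (expCont c)).intervalIntegrable 0 1
    have i2 : IntervalIntegrable (fun x : ℝ => (∫ u in (0:ℝ)..x, g u) * Complex.exp (c * x))
        volume 0 1 := by
      apply ContinuousOn.intervalIntegrable
      rw [huIcc]
      exact prim_cont.mul (expCont c).continuousOn
    have e2 : ∫ x in (0:ℝ)..1, (d 0 + ∫ u in (0:ℝ)..x, g u) * Complex.exp (c * x)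
        = (∫ x in (0:ℝ)..1, d 0 * Complex.exp (c * x))
          + ∫ x in (0:ℝ)..1, (∫ u in (0:ℝ)..x, g u) * Complex.exp (c * x) := by
      rw [← intervalIntegral.integral_add i1 i2]
      refine intervalIntegral.integral_congr (fun x _ => ?_)
      ring
    have e3 : c * ∫ x in (0:ℝ)..1, d 0 * Complex.exp (c * x) = d 0 * (Complex.exp c - 1) := by
      rw [intervalIntegral.integral_const_mul]
      have h := expInt c 0 zero_le_one
      rw [intervalIntegral.integral_const_mul] at h
      rw [mul_left_comm, h]
      norm_num
    rw [e1, e2, mul_add, e3, ← intervalIntegral.integral_const_mul]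
    congr 1
    exact intervalIntegral.integral_congr (fun x _ => by ring)
  -- step 2: Fubini on the second term
  have hswap : ∫ x in (0:ℝ)..1, (∫ u in (0:ℝ)..x, g u) * (c * Complex.exp (c * x))
      = ∫ u in (0:ℝ)..1, g u * (Complex.exp c - Complex.exp (c * u)) := by
    rw [intervalIntegral.integral_of_le zero_le_one, intervalIntegral.integral_of_le zero_le_one]
    have h1 : ∫ x in Set.Ioc (0:ℝ) 1, (∫ u in (0:ℝ)..x, g u) * (c * Complex.exp (c * x))
        = ∫ x in Set.Ioc (0:ℝ) 1, (∫ u in Set.Ioc (0:ℝ) x, g u) * (c * Complex.exp (c * x)) := by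
      refine setIntegral_congr_fun measurableSet_Ioc (fun x hx => ?_)
      rw [intervalIntegral.integral_of_le hx.1.le]
    rw [h1, swap_tri g (fun x => c * Complex.exp (c * x))
      (hg.mono_set Set.Ioc_subset_Icc_self) (continuous_const.mul (expCont c))]
    refine setIntegral_congr_fun measurableSet_Ioc (fun u hu => ?_)
    congr 1
    rw [← intervalIntegral.integral_of_le hu.2]
    exact expInt c u hu.2
  -- step 3: conclude
  have hd1 : d 1 = d 0 + ∫ u in (0:ℝ)..1, g u := hd 1 (by norm_num)
  have hsplit2 : ∫ u in (0:ℝ)..1, g u * (Complex.exp c - Complex.exp (c * u))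
      = (∫ u in (0:ℝ)..1, g u) * Complex.exp c - ∫ u in (0:ℝ)..1, g u * Complex.exp (c * u) := by
    have i3 : IntervalIntegrable (fun u : ℝ => g u * Complex.exp c) volume 0 1 :=
      hgI.mul_const _
    have i4 : IntervalIntegrable (fun u : ℝ => g u * Complex.exp (c * u)) volume 0 1 := by
      apply hgI.mul_continuousOn (expCont c).continuousOn
    rw [← intervalIntegral.integral_mul_const, ← intervalIntegral.integral_sub i3 i4]
    refine intervalIntegral.integral_congr (fun x _ => ?_)
    ring
  rw [hsplit, hswap, hsplit2, hd1]
  ring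

lemma second_order (g d ψ : ℝ → ℂ) (c e : ℂ) (hce : Complex.exp c * e = 1)
    (hg : IntegrableOn g (Set.Icc (0:ℝ) 1)) (hdInt : IntegrableOn d (Set.Icc (0:ℝ) 1))
    (hd : ∀ x ∈ Set.Icc (0:ℝ) 1, d x = d 0 + ∫ u in (0:ℝ)..x, g u)
    (hψ : ∀ x ∈ Set.Icc (0:ℝ) 1, ψ x = ψ 0 + ∫ u in (0:ℝ)..x, d u)
    (hbd : d 1 = e * d 0) (hbψ : ψ 1 = e * ψ 0) :
    ∫ x in (0:ℝ)..1, g x * Complex.exp (c * x)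
      = c ^ 2 * ∫ x in (0:ℝ)..1, ψ x * Complex.exp (c * x) := by
  have p1 := parts g hg d hd c
  have p2 := parts d hdInt ψ hψ c
  rw [p1, p2, hbd, hbψ]
  linear_combination (d 0 - c * ψ 0) * hce

-- dot functional
noncomputable def dotC (m : ℕ) (v : Fin m → ℂ) : (Fin m → ℂ) →L[ℂ] ℂ :=
  ∑ i, ((starRingEnd ℂ) (v i)) • (ContinuousLinearMap.proj i)

lemma dotC_apply (m : ℕ) (v w : Fin m → ℂ) :
    dotC m v w = ∑ i, w i * (starRingEnd ℂ) (v i) := by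
  simp [dotC, ContinuousLinearMap.sum_apply, mul_comm]

lemma dotC_integrableOn (m : ℕ) (v : Fin m → ℂ) (f : ℝ → Fin m → ℂ) (s : Set ℝ)
    (hf : IntegrableOn f s) : IntegrableOn (fun x => dotC m v (f x)) s :=
  (dotC m v).integrable_comp hf

lemma dotC_prim (m : ℕ) (v : Fin m → ℂ) (f : ℝ → Fin m → ℂ) (x : ℝ)
    (hf : IntervalIntegrable f volume 0 x) :
    dotC m v (∫ u in (0:ℝ)..x, f u) = ∫ u in (0:ℝ)..x, dotC m v (f u) :=
  ((dotC m v).intervalIntegral_comp_comm hf).symm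

end EigenAux

open EigenAux in
/-- Jordan-chain version: if `(λ, Ψ)` is an eigenpair of `L_t(Q)`, `C = ∫₀¹ Q`, and
`v*_0, …, v*_s` is a Jordan chain of `Cᴴ` for `conj(μ)` (i.e. `(Cᴴ − conj(μ)I)v*_0 = 0`
and `(Cᴴ − conj(μ)I)v*_p = v*_{p−1}` for `1 ≤ p ≤ s`), then with
`μ_k = (2πk+t)² + μ` and `Φ*_p(x) = v*_p e^{i(2πk+t)x}`,
`(λ − μ_k)^{s+1}(Ψ, Φ*_s) = ∑_{p=0}^{s} (λ − μ_k)^p ((Q−C)Ψ, Φ*_p)`. -/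
theorem eigenpair_jordan_chain_identity (m : ℕ) (hm : 1 ≤ m) (t : ℝ)
    (Q : ℝ → Matrix (Fin m) (Fin m) ℂ)
    (hQ : ∀ i j, MeasureTheory.IntegrableOn (fun x => Q x i j) (Set.Icc (0:ℝ) 1))
    (lam : ℂ) (Ψ : ℝ → Fin m → ℂ) (h : IsEigenpair m t Q lam Ψ)
    (k : ℤ) (μ : ℂ) (s : ℕ) (vst : ℕ → Fin m → ℂ)
    (hv0 : (Matrix.conjTranspose (Cmat m Q) - (starRingEnd ℂ) μ • 1).mulVec (vst 0) = 0)
    (hvp : ∀ p : ℕ, 1 ≤ p → p ≤ s →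
      (Matrix.conjTranspose (Cmat m Q) - (starRingEnd ℂ) μ • 1).mulVec (vst p) = vst (p - 1)) :
    (lam - (((2 * Real.pi * (k : ℝ) + t) ^ 2 : ℝ) : ℂ) - μ) ^ (s + 1)
        * ip m Ψ (expVec m t k (vst s))
      = ∑ p ∈ Finset.range (s + 1),
          (lam - (((2 * Real.pi * (k : ℝ) + t) ^ 2 : ℝ) : ℂ) - μ) ^ p
            * ip m (fun x => (Q x - Cmat m Q).mulVec (Ψ x)) (expVec m t k (vst p)) := by
  obtain ⟨-, D, G, hG, hΨp, hDp, hae, hb1, hb2⟩ := h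
  set θ : ℝ := 2 * Real.pi * (k : ℝ) + t with hθ
  set c : ℂ := -(Complex.I * (θ : ℂ)) with hc
  set e : ℂ := Complex.exp (Complex.I * (t : ℂ)) with he
  have hce : Complex.exp c * e = 1 := by
    rw [he, ← Complex.exp_add]
    have h1 : c + Complex.I * (t : ℂ) = ((-k : ℤ) : ℂ) * (2 * (Real.pi : ℂ) * Complex.I) := by
      rw [hc, hθ]; push_cast; ring
    rw [h1, Complex.exp_int_mul_two_pi_mul_I]
  have hc2 : c ^ 2 = -(((θ ^ 2 : ℝ)) : ℂ) := by
    rw [hc]; push_cast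
    rw [show (-(Complex.I * (θ:ℂ))) ^ 2 = Complex.I ^ 2 * (θ:ℂ)^2 by ring, Complex.I_sq]
    ring
  have huIcc : Set.uIcc (0:ℝ) 1 = Set.Icc 0 1 := Set.uIcc_of_le zero_le_one
  -- integrability / continuity infrastructure
  have hGx : ∀ x ∈ Set.Icc (0:ℝ) 1, IntervalIntegrable G volume 0 x := fun x hx => by
    apply IntegrableOn.intervalIntegrable
    rw [Set.uIcc_of_le hx.1]
    exact hG.mono_set (Set.Icc_subset_Icc le_rfl hx.2)
  have hDcont : ContinuousOn D (Set.Icc (0:ℝ) 1) := by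
    have hp : ContinuousOn (fun x => ∫ u in (0:ℝ)..x, G u) (Set.Icc 0 1) := by
      have := intervalIntegral.continuousOn_primitive_interval (a := (0:ℝ)) (b := 1)
        (μ := volume) (f := G) (by rw [huIcc]; exact hG)
      rwa [huIcc] at this
    exact (continuousOn_const.add hp).congr hDp
  have hDIcc : IntegrableOn D (Set.Icc (0:ℝ) 1) := hDcont.integrableOn_Icc
  have hDx : ∀ x ∈ Set.Icc (0:ℝ) 1, IntervalIntegrable D volume 0 x := fun x hx => by
    apply IntegrableOn.intervalIntegrable
    rw [Set.uIcc_of_le hx.1]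
    exact hDIcc.mono_set (Set.Icc_subset_Icc le_rfl hx.2)
  have hΨcont : ContinuousOn Ψ (Set.Icc (0:ℝ) 1) := by
    have hp : ContinuousOn (fun x => ∫ u in (0:ℝ)..x, D u) (Set.Icc 0 1) := by
      have := intervalIntegral.continuousOn_primitive_interval (a := (0:ℝ)) (b := 1)
        (μ := volume) (f := D) (by rw [huIcc]; exact hDIcc)
      rwa [huIcc] at this
    exact (continuousOn_const.add hp).congr hΨp
  -- continuity of scalarized functions
  have hψcont : ∀ v : Fin m → ℂ,
      ContinuousOn (fun x => dotC m v (Ψ x) * Complex.exp (c * x)) (Set.Icc (0:ℝ) 1) :=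
    fun v => ((dotC m v).continuous.comp_continuousOn hΨcont).mul (expCont c).continuousOn
  have iΨv : ∀ v : Fin m → ℂ,
      IntervalIntegrable (fun x => dotC m v (Ψ x) * Complex.exp (c * x)) volume 0 1 := fun v => by
    apply ContinuousOn.intervalIntegrable
    rw [huIcc]; exact hψcont v
  have iGv : ∀ v : Fin m → ℂ,
      IntervalIntegrable (fun x => dotC m v (G x) * Complex.exp (c * x)) volume 0 1 := fun v => by
    apply IntervalIntegrable.mul_continuousOn
    · apply IntegrableOn.intervalIntegrable
      rw [huIcc]; exact dotC_integrableOn m v G _ hG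
    · exact (expCont c).continuousOn
  have haev : ∀ v : Fin m → ℂ, ∀ᵐ x ∂(volume.restrict (Set.Ioc (0:ℝ) 1)),
      dotC m v ((Q x).mulVec (Ψ x)) * Complex.exp (c * x)
        = lam * (dotC m v (Ψ x) * Complex.exp (c * x))
          + dotC m v (G x) * Complex.exp (c * x) := by
    intro v
    have h1 := ae_restrict_of_ae_restrict_of_subset Set.Ioc_subset_Icc_self hae
    filter_upwards [h1] with x hx
    have h2 : (Q x).mulVec (Ψ x) = lam • Ψ x + G x := by rw [← hx]; abel
    rw [h2, map_add, _root_.map_smul, smul_eq_mul]; ring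
  -- J functional
  set J : (Fin m → ℂ) → ℂ := fun v => ∫ x in (0:ℝ)..1, dotC m v (Ψ x) * Complex.exp (c * x)
    with hJ
  -- key: second order identity scalarized
  have keyB : ∀ v : Fin m → ℂ,
      ∫ x in (0:ℝ)..1, dotC m v ((Q x).mulVec (Ψ x)) * Complex.exp (c * x)
        = (lam - (((θ ^ 2 : ℝ)) : ℂ)) * J v := by
    intro v
    have hψprim : ∀ x ∈ Set.Icc (0:ℝ) 1,
        (fun y => dotC m v (Ψ y)) x = dotC m v (Ψ 0) + ∫ u in (0:ℝ)..x, dotC m v (D u) := by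
      intro x hx
      simp only
      rw [hΨp x hx, map_add, dotC_prim m v D x (hDx x hx)]
    have hdprim : ∀ x ∈ Set.Icc (0:ℝ) 1,
        (fun y => dotC m v (D y)) x = dotC m v (D 0) + ∫ u in (0:ℝ)..x, dotC m v (G u) := by
      intro x hx
      simp only
      rw [hDp x hx, map_add, dotC_prim m v G x (hGx x hx)]
    have hso := second_order (fun x => dotC m v (G x)) (fun x => dotC m v (D x))
      (fun x => dotC m v (Ψ x)) c e hce
      (dotC_integrableOn m v G _ hG) (dotC_integrableOn m v D _ hDIcc)
      hdprim hψprim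
      (by rw [hb2, _root_.map_smul, smul_eq_mul])
      (by rw [hb1, _root_.map_smul, smul_eq_mul])
    -- a.e. rewrite of the integrand
    have hae' := haev v
    have e1 : ∫ x in (0:ℝ)..1, dotC m v ((Q x).mulVec (Ψ x)) * Complex.exp (c * x)
        = ∫ x in (0:ℝ)..1, (lam * (dotC m v (Ψ x) * Complex.exp (c * x))
            + dotC m v (G x) * Complex.exp (c * x)) := by
      rw [intervalIntegral.integral_of_le zero_le_one,
        intervalIntegral.integral_of_le zero_le_one]
      exact integral_congr_ae hae'
    have iG := iGv v
    rw [e1, intervalIntegral.integral_add ((iΨv v).const_mul lam) iG,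
      intervalIntegral.integral_const_mul, hso, hc2, hJ]
    ring
  -- translation between ip and scalarized integrals
  have ipEq : ∀ (f : ℝ → Fin m → ℂ) (v : Fin m → ℂ),
      ip m f (expVec m t k v)
        = ∫ x in (0:ℝ)..1, dotC m v (f x) * Complex.exp (c * x) := by
    intro f v
    unfold ip expVec
    refine intervalIntegral.integral_congr (fun x _ => ?_)
    rw [dotC_apply, Finset.sum_mul]
    refine Finset.sum_congr rfl (fun i _ => ?_)
    rw [map_mul]
    have hconj : (starRingEnd ℂ)
        (Complex.exp (Complex.I * ((2*Real.pi*(k:ℝ) + t : ℝ) : ℂ) * (x : ℂ)))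
        = Complex.exp (c * x) := by
      rw [← Complex.exp_conj]
      congr 1
      rw [hc, hθ]
      simp only [map_mul, Complex.conj_I, Complex.conj_ofReal]
      push_cast
      ring
    rw [hconj]; ring
  -- adjoint identity
  have adj : ∀ (w v : Fin m → ℂ),
      dotC m v ((Cmat m Q).mulVec w)
        = dotC m ((Matrix.conjTranspose (Cmat m Q)).mulVec v) w := by
    intro w v
    rw [dotC_apply, dotC_apply]
    simp only [Matrix.mulVec, dotProduct, Matrix.conjTranspose_apply, map_sum, map_mul,
      Complex.conj_conj, Finset.sum_mul, Finset.mul_sum]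
    rw [Finset.sum_comm]
    exact Finset.sum_congr rfl fun i _ => Finset.sum_congr rfl fun j _ => by
      simp only [Complex.star_def, Complex.conj_conj]; ring
  -- conjugate-linearity of dotC in its vector
  have dotC_sa : ∀ (v w u : Fin m → ℂ),
      dotC m ((starRingEnd ℂ) μ • v + w) u = μ * dotC m v u + dotC m w u := by
    intro v w u
    rw [dotC_apply, dotC_apply, dotC_apply, Finset.mul_sum, ← Finset.sum_add_distrib]
    refine Finset.sum_congr rfl fun i _ => ?_
    simp only [Pi.add_apply, Pi.smul_apply, smul_eq_mul, map_add, map_mul, Complex.conj_conj]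
    ring
  have Jlin : ∀ (v w : Fin m → ℂ), J ((starRingEnd ℂ) μ • v + w) = μ * J v + J w := by
    intro v w
    rw [hJ]
    simp only
    rw [← intervalIntegral.integral_const_mul,
      ← intervalIntegral.integral_add ((iΨv v).const_mul μ) (iΨv w)]
    refine intervalIntegral.integral_congr (fun x _ => ?_)
    rw [dotC_sa]; ring
  have J0 : J 0 = 0 := by
    rw [hJ]
    simp only
    have : ∀ x : ℝ, dotC m (0 : Fin m → ℂ) (Ψ x) * Complex.exp (c * x) = 0 := by
      intro x; rw [dotC_apply]; simp
    simp only [this, intervalIntegral.integral_zero]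
  -- the master step
  set z : ℂ := lam - (((θ ^ 2 : ℝ)) : ℂ) - μ with hz
  have master : ∀ (v w : Fin m → ℂ),
      (Matrix.conjTranspose (Cmat m Q)).mulVec v = (starRingEnd ℂ) μ • v + w →
      ip m (fun x => (Q x - Cmat m Q).mulVec (Ψ x)) (expVec m t k v) = z * J v - J w := by
    intro v w hvw
    rw [ipEq]
    have iQv : IntervalIntegrable
        (fun x => dotC m v ((Q x).mulVec (Ψ x)) * Complex.exp (c * x)) volume 0 1 := by
      rw [intervalIntegrable_iff_integrableOn_Ioc_of_le zero_le_one]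
      have a1 := (iΨv v).const_mul lam
      have a2 := iGv v
      rw [intervalIntegrable_iff_integrableOn_Ioc_of_le zero_le_one] at a1 a2
      exact (a1.add a2).congr ((haev v).mono fun x hx => hx.symm)
    have split : ∫ x in (0:ℝ)..1, dotC m v ((Q x - Cmat m Q).mulVec (Ψ x)) * Complex.exp (c * x)
        = (∫ x in (0:ℝ)..1, dotC m v ((Q x).mulVec (Ψ x)) * Complex.exp (c * x))
          - J ((Matrix.conjTranspose (Cmat m Q)).mulVec v) := by
      have e2 : ∀ x : ℝ, dotC m v ((Q x - Cmat m Q).mulVec (Ψ x)) * Complex.exp (c * x)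
          = dotC m v ((Q x).mulVec (Ψ x)) * Complex.exp (c * x)
            - dotC m ((Matrix.conjTranspose (Cmat m Q)).mulVec v) (Ψ x) * Complex.exp (c * x) := by
        intro x
        rw [Matrix.sub_mulVec, map_sub, adj (Ψ x) v]
        ring
      simp only [e2]
      rw [intervalIntegral.integral_sub iQv (iΨv _), hJ]
    rw [split, keyB, hvw, Jlin, hz]
    ring
  -- base and inductive chain facts
  have hchain0 : (Matrix.conjTranspose (Cmat m Q)).mulVec (vst 0)
      = (starRingEnd ℂ) μ • vst 0 + 0 := by
    have := hv0
    rw [Matrix.sub_mulVec, Matrix.smul_mulVec, Matrix.one_mulVec, sub_eq_zero] at this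
    rw [this]; abel
  have hchainp : ∀ p : ℕ, 1 ≤ p → p ≤ s →
      (Matrix.conjTranspose (Cmat m Q)).mulVec (vst p)
        = (starRingEnd ℂ) μ • vst p + vst (p - 1) := by
    intro p h1 h2
    have h3 := hvp p h1 h2
    rw [Matrix.sub_mulVec, Matrix.smul_mulVec, Matrix.one_mulVec,
      sub_eq_iff_eq_add] at h3
    rw [h3, add_comm]
  -- induction
  have induct : ∀ n : ℕ,
      (∀ p : ℕ, 1 ≤ p → p ≤ n →
        (Matrix.conjTranspose (Cmat m Q)).mulVec (vst p)
          = (starRingEnd ℂ) μ • vst p + vst (p - 1)) →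
      z ^ (n + 1) * J (vst n)
        = ∑ p ∈ Finset.range (n + 1),
            z ^ p * ip m (fun x => (Q x - Cmat m Q).mulVec (Ψ x)) (expVec m t k (vst p)) := by
    intro n
    induction n with
    | zero =>
      intro _
      rw [Finset.sum_range_one, pow_one, pow_zero, one_mul, master (vst 0) 0 hchain0, J0]
      ring
    | succ n ih =>
      intro hch
      have ih' := ih (fun p h1 h2 => hch p h1 (h2.trans (Nat.le_succ n)))
      have hstep := master (vst (n+1)) (vst n)
        (by simpa using hch (n+1) (Nat.le_add_left 1 n) (le_refl _))
      rw [Finset.sum_range_succ, ← ih', hstep]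
      ring
  have goalJ : ip m Ψ (expVec m t k (vst s)) = J (vst s) := ipEq Ψ (vst s)
  rw [goalJ]
  exact induct s hchainp
end

section
/- Let m ≥ 1 be an integer, t ∈ (0,2π) with t ≠ π, K > 0, and let Q : [0,1] → Matrix m m ℂ have Lebesgue-integrable entries b_{i,j}. There exists N ∈ ℕ, depending only on m, t, K, Q, such that: for every k ∈ ℤ with |k| ≥ N and every eigenpair (λ, Ψ) of the quasiperiodic problem L_t(Q) with ‖Ψ‖_{L²} = 1 and |λ − (2πk+t)²| ≤ K(1+|k|)^{1−1/m}, one has for all n ∈ ℤ and s ∈ {1,…,m}: (QΨ, φ_{n,s}) = ∑_{q=1}^{m} ∑_{p ∈ ℤ} b_{s,q,n−p} · (Ψ, φ_{p,q}), where the double series converges absolutely and b_{s,q,l} = ∫₀¹ b_{s,q}(x) e^{−2πi l x} dx. -/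
open MeasureTheory

open Set Complex

lemma aux_triangle {f g : ℝ → ℂ} (hf : IntegrableOn f (Set.Icc 0 1)) (hg : Continuous g) :
    ∫ x in (0:ℝ)..1, (∫ s in (0:ℝ)..x, f s) * g x
      = ∫ s in (0:ℝ)..1, f s * ∫ x in s..(1:ℝ), g x := by
  have hf' : IntegrableOn f (Set.Ioc 0 1) := hf.mono_set Set.Ioc_subset_Icc_self
  have hg' : IntegrableOn g (Set.Ioc 0 1) :=
    (hg.integrableOn_Icc (a := 0) (b := 1)).mono_set Set.Ioc_subset_Icc_self
  set μ : Measure ℝ := volume.restrict (Set.Ioc 0 1) with hμ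
  have hFeq : (fun z : ℝ × ℝ => if z.2 ≤ z.1 then f z.2 * g z.1 else 0)
      = Set.indicator {z : ℝ × ℝ | z.2 ≤ z.1} (fun z => f z.2 * g z.1) := by
    ext z; simp [Set.indicator_apply, Set.mem_setOf_eq]
  have hFmeas : AEStronglyMeasurable (fun z : ℝ × ℝ => if z.2 ≤ z.1 then f z.2 * g z.1 else 0)
      (μ.prod μ) := by
    rw [hFeq]
    exact ((hf'.aestronglyMeasurable.comp_snd).mul (hg'.aestronglyMeasurable.comp_fst)).indicator
      (measurableSet_le measurable_snd measurable_fst)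
  have hFint : Integrable (fun z : ℝ × ℝ => if z.2 ≤ z.1 then f z.2 * g z.1 else 0) (μ.prod μ) := by
    have hb : Integrable (fun z : ℝ × ℝ => ‖g z.1‖ * ‖f z.2‖) (μ.prod μ) :=
      Integrable.mul_prod hg'.norm hf'.norm
    refine hb.mono' hFmeas (Filter.Eventually.of_forall fun z => ?_)
    by_cases h : z.2 ≤ z.1
    · simp only [h, if_true, norm_mul]
      exact le_of_eq (mul_comm _ _)
    · simp only [h, if_false, norm_zero]
      positivity
  have swap := MeasureTheory.integral_integral_swap
      (f := fun x s => if s ≤ x then f s * g x else 0) (μ := μ) (ν := μ) hFint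
  have hL : ∫ x in (0:ℝ)..1, (∫ s in (0:ℝ)..x, f s) * g x
      = ∫ x, (∫ s, (if s ≤ x then f s * g x else 0) ∂μ) ∂μ := by
    rw [intervalIntegral.integral_of_le zero_le_one, hμ]
    refine setIntegral_congr_fun measurableSet_Ioc fun x hx => ?_
    have h1 : ∫ s, (if s ≤ x then f s * g x else 0) ∂(volume.restrict (Set.Ioc (0:ℝ) 1))
        = (∫ s, (if s ≤ x then f s else 0) ∂(volume.restrict (Set.Ioc (0:ℝ) 1))) * g x := by
      rw [← integral_mul_const]
      congr 1; ext s; by_cases h : s ≤ x <;> simp [h]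
    rw [h1]
    congr 1
    have h2 : (fun s => if s ≤ x then f s else 0) = Set.indicator (Set.Iic x) f := by
      ext s; simp [Set.indicator_apply]
    rw [intervalIntegral.integral_of_le hx.1.le]
    show ∫ s in Set.Ioc (0:ℝ) x, f s = _
    rw [h2, MeasureTheory.setIntegral_indicator measurableSet_Iic, Set.Ioc_inter_Iic,
      min_eq_right hx.2]
  have hR : ∫ s, (∫ x, (if s ≤ x then f s * g x else 0) ∂μ) ∂μ
      = ∫ s in (0:ℝ)..1, f s * ∫ x in s..(1:ℝ), g x := by
    rw [intervalIntegral.integral_of_le zero_le_one, hμ]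
    refine setIntegral_congr_fun measurableSet_Ioc fun s hs => ?_
    have h1 : ∫ x, (if s ≤ x then f s * g x else 0) ∂(volume.restrict (Set.Ioc (0:ℝ) 1))
        = f s * ∫ x, (if s ≤ x then g x else 0) ∂(volume.restrict (Set.Ioc (0:ℝ) 1)) := by
      rw [← integral_const_mul]
      congr 1; ext x; by_cases h : s ≤ x <;> simp [h]
    rw [h1]
    congr 1
    have h2 : (fun x => if s ≤ x then g x else 0) = Set.indicator (Set.Ici s) g := by
      ext x; simp [Set.indicator_apply]
    show ∫ x in Set.Ioc (0:ℝ) 1, (if s ≤ x then g x else 0) = _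
    rw [h2, MeasureTheory.setIntegral_indicator measurableSet_Ici]
    have h3 : Set.Ioc (0:ℝ) 1 ∩ Set.Ici s = Set.Icc s 1 := by
      ext x
      simp only [Set.mem_inter_iff, Set.mem_Ioc, Set.mem_Ici, Set.mem_Icc]
      constructor
      · rintro ⟨⟨_, h2⟩, h3⟩; exact ⟨h3, h2⟩
      · rintro ⟨h1, h2⟩; exact ⟨⟨lt_of_lt_of_le hs.1 h1, h2⟩, h1⟩
    rw [h3, MeasureTheory.integral_Icc_eq_integral_Ioc, ← intervalIntegral.integral_of_le hs.2]
  rw [hL, swap, hR]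

lemma aux_ibp {u v : ℝ → ℂ} (hv : IntegrableOn v (Set.Icc 0 1))
    (hu : ∀ x ∈ Set.Icc (0:ℝ) 1, u x = u 0 + ∫ s in (0:ℝ)..x, v s)
    {ω : ℝ} (hω : ω ≠ 0)
    (hqp : Complex.exp (-(Complex.I * ω)) * u 1 = u 0) :
    ∫ x in (0:ℝ)..1, u x * Complex.exp (-(Complex.I * ω * x))
      = (1 / (Complex.I * ω)) * ∫ x in (0:ℝ)..1, v x * Complex.exp (-(Complex.I * ω * x)) := by
  set c : ℂ := -(Complex.I * ω) with hc
  have hc0 : c ≠ 0 := by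
    simp only [hc, neg_ne_zero, mul_ne_zero_iff]
    exact ⟨Complex.I_ne_zero, by exact_mod_cast hω⟩
  have hexp : ∀ x : ℝ, Complex.exp (-(Complex.I * ω * x)) = Complex.exp (c * x) := by
    intro x; rw [hc]; ring_nf
  have hEint : ∀ s : ℝ, ∫ x in s..(1:ℝ), Complex.exp (c * x)
      = (Complex.exp (c * 1) - Complex.exp (c * s)) / c := fun s =>
    integral_exp_mul_complex hc0
  have hvi : IntervalIntegrable v volume 0 1 := by
    rw [intervalIntegrable_iff, uIoc_of_le zero_le_one]
    exact hv.mono_set Set.Ioc_subset_Icc_self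
  have hP : ContinuousOn (fun x => ∫ s in (0:ℝ)..x, v s) (Set.Icc 0 1) := by
    have := intervalIntegral.continuousOn_primitive_interval (a := 0) (b := 1) (f := v)
      (μ := volume) (by rwa [Set.uIcc_of_le zero_le_one])
    rwa [Set.uIcc_of_le zero_le_one] at this
  -- rewrite LHS using hu
  have step1 : ∫ x in (0:ℝ)..1, u x * Complex.exp (-(Complex.I * ω * x))
      = ∫ x in (0:ℝ)..1, (u 0 + ∫ s in (0:ℝ)..x, v s) * Complex.exp (c * x) := by
    rw [intervalIntegral.integral_of_le zero_le_one, intervalIntegral.integral_of_le zero_le_one]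
    refine setIntegral_congr_fun measurableSet_Ioc fun x hx => ?_
    rw [hu x (Set.Ioc_subset_Icc_self hx), hexp]
  rw [step1]
  have hi1 : IntervalIntegrable (fun x => u 0 * Complex.exp (c * x)) volume 0 1 :=
    (continuous_const.mul (by fun_prop : Continuous fun x : ℝ =>
      Complex.exp (c * x))).intervalIntegrable 0 1
  have hi2 : IntervalIntegrable (fun x => (∫ s in (0:ℝ)..x, v s) * Complex.exp (c * x))
      volume 0 1 := by
    apply ContinuousOn.intervalIntegrable
    rw [Set.uIcc_of_le zero_le_one]
    exact hP.mul (by fun_prop : Continuous fun x : ℝ => Complex.exp (c * x)).continuousOn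
  have step2 : ∫ x in (0:ℝ)..1, (u 0 + ∫ s in (0:ℝ)..x, v s) * Complex.exp (c * x)
      = (∫ x in (0:ℝ)..1, u 0 * Complex.exp (c * x))
        + ∫ x in (0:ℝ)..1, (∫ s in (0:ℝ)..x, v s) * Complex.exp (c * x) := by
    rw [← intervalIntegral.integral_add hi1 hi2]
    congr 1; ext x; ring
  rw [step2]
  have e1 : ∫ x in (0:ℝ)..1, u 0 * Complex.exp (c * x)
      = u 0 * ((Complex.exp (c * 1) - Complex.exp (c * 0)) / c) := by
    rw [intervalIntegral.integral_const_mul, integral_exp_mul_complex hc0]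
    norm_num
  have e2 : ∫ x in (0:ℝ)..1, (∫ s in (0:ℝ)..x, v s) * Complex.exp (c * x)
      = ∫ s in (0:ℝ)..1, v s * ((Complex.exp (c * 1) - Complex.exp (c * s)) / c) := by
    rw [aux_triangle hv (by fun_prop)]
    congr 1; ext s; rw [hEint]
  have e3 : ∫ s in (0:ℝ)..1, v s * ((Complex.exp (c * 1) - Complex.exp (c * s)) / c)
      = (Complex.exp (c * 1) / c) * (∫ s in (0:ℝ)..1, v s)
        - (1/c) * ∫ s in (0:ℝ)..1, v s * Complex.exp (c * s) := by
    have hvE : IntervalIntegrable (fun s => v s * Complex.exp (c * s)) volume 0 1 := by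
      rw [intervalIntegrable_iff, uIoc_of_le zero_le_one]
      exact ((hv.mul_continuousOn (by fun_prop : Continuous fun x : ℝ =>
        Complex.exp (c * x)).continuousOn isCompact_Icc).mono_set Set.Ioc_subset_Icc_self)
    rw [← intervalIntegral.integral_const_mul, ← intervalIntegral.integral_const_mul,
      ← intervalIntegral.integral_sub ((hvi.const_mul _)) (hvE.const_mul _)]
    congr 1; ext s; field_simp
  have hv1 : ∫ s in (0:ℝ)..1, v s = u 1 - u 0 := by
    have := hu 1 (by norm_num)
    rw [this]; ring
  rw [e1, e2, e3, hv1]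
  have hE1 : Complex.exp (c * 1) * u 1 = u 0 := by rw [mul_one]; exact hqp
  have hiω : (Complex.I * (ω:ℂ)) ≠ 0 := by
    refine mul_ne_zero Complex.I_ne_zero (by exact_mod_cast hω)
  rw [mul_zero, Complex.exp_zero]
  have hrhs : ∫ x in (0:ℝ)..1, v x * Complex.exp (-(Complex.I * ω * x))
      = ∫ x in (0:ℝ)..1, v x * Complex.exp (c * x) := by simp only [hexp]
  have hIc : Complex.I * (ω:ℂ) = -c := by rw [hc]; ring
  rw [hrhs, hIc]
  linear_combination (1/c) * hE1

lemma aux_conj_exp (ω x : ℝ) :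
    (starRingEnd ℂ) (Complex.exp (Complex.I * (ω : ℂ) * (x : ℂ)))
      = Complex.exp (-(Complex.I * (ω : ℂ) * (x : ℂ))) := by
  rw [← Complex.exp_conj]
  congr 1
  simp [map_mul, Complex.conj_I, Complex.conj_ofReal]

lemma aux_ip_eq (m : ℕ) (t : ℝ) (p : ℤ) (q : Fin m) (Ψ : ℝ → Fin m → ℂ) :
    ip m Ψ (phi m t p q) = ∫ x in (0:ℝ)..1,
      Ψ x q * Complex.exp (-(Complex.I * ((2*Real.pi*(p:ℝ) + t : ℝ) : ℂ) * (x : ℂ))) := by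
  unfold ip phi
  congr 1
  ext x
  rw [Finset.sum_eq_single q]
  · rw [if_pos rfl, aux_conj_exp]
  · intro i _ hi; rw [if_neg hi, map_zero, mul_zero]
  · intro h; exact absurd (Finset.mem_univ q) h

lemma aux_omega_ne {t : ℝ} (ht : t ∈ Set.Ioo 0 (2*Real.pi)) (p : ℤ) :
    2*Real.pi*(p:ℝ) + t ≠ 0 := by
  obtain ⟨h1, h2⟩ := ht
  rcases le_or_gt 0 p with hp | hp
  · have : (0:ℝ) ≤ p := by exact_mod_cast hp
    nlinarith [Real.pi_pos]
  · have hple : p ≤ -1 := by omega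
    have : (p:ℝ) ≤ -1 := by exact_mod_cast hple
    nlinarith [Real.pi_pos]

lemma aux_omega_lb {t : ℝ} (ht : t ∈ Set.Ioo 0 (2*Real.pi)) :
    ∃ δ : ℝ, 0 < δ ∧ ∀ p : ℤ, δ * (1 + |(p:ℝ)|) ≤ |2*Real.pi*(p:ℝ) + t| := by
  obtain ⟨h1, h2⟩ := ht
  refine ⟨min t ((2*Real.pi - t)/2), lt_min h1 (by linarith), fun p => ?_⟩
  have hd1 : min t ((2*Real.pi - t)/2) ≤ t := min_le_left _ _
  have hd2 : min t ((2*Real.pi - t)/2) ≤ (2*Real.pi - t)/2 := min_le_right _ _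
  rcases le_or_gt 0 p with hp | hp
  · have hp' : (0:ℝ) ≤ p := by exact_mod_cast hp
    rw [_root_.abs_of_nonneg hp', _root_.abs_of_pos (by nlinarith [Real.pi_pos])]
    nlinarith [Real.pi_pos]
  · have hple : p ≤ -1 := by omega
    have hp' : (p:ℝ) ≤ -1 := by exact_mod_cast hple
    rw [abs_of_nonpos (by linarith), abs_of_neg (by nlinarith [Real.pi_pos])]
    nlinarith [Real.pi_pos]

lemma aux_summable_inv1p : Summable (fun p : ℤ => 1/(1 + |(p:ℝ)|)^2) := by
  have hnat : Summable (fun n : ℕ => 1/(1 + (n:ℝ))^2) := by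
    have := (Real.summable_one_div_nat_pow (p := 2)).mpr one_lt_two
    have h2 := (summable_nat_add_iff (f := fun n : ℕ => 1/((n:ℝ))^2) 1).mpr this
    refine h2.congr fun n => ?_
    push_cast; ring_nf
  refine Summable.of_nat_of_neg (hnat.congr fun n => ?_) (hnat.congr fun n => ?_) <;>
    · push_cast [abs_neg]
      rw [_root_.abs_of_nonneg (by positivity : (0:ℝ) ≤ (n:ℝ))]

lemma aux_wsummable {t : ℝ} (ht : t ∈ Set.Ioo 0 (2*Real.pi)) :
    Summable (fun p : ℤ => 1/(2*Real.pi*(p:ℝ)+t)^2) := by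
  obtain ⟨δ, hδ, hlb⟩ := aux_omega_lb ht
  refine Summable.of_nonneg_of_le (fun p => by positivity)
    (fun p => ?_) ((aux_summable_inv1p).mul_left (1/δ^2))
  have h1 : 0 < δ * (1 + |(p:ℝ)|) := by positivity
  have h2 : (δ * (1 + |(p:ℝ)|))^2 ≤ (2*Real.pi*(p:ℝ)+t)^2 := by
    rw [← _root_.sq_abs (2*Real.pi*(p:ℝ)+t)]
    exact pow_le_pow_left₀ h1.le (hlb p) 2
  have h3 : 1/(2*Real.pi*(p:ℝ)+t)^2 ≤ 1/(δ * (1 + |(p:ℝ)|))^2 :=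
    one_div_le_one_div_of_le (by positivity) h2
  refine h3.trans (le_of_eq ?_)
  rw [mul_pow]
  field_simp

lemma aux_norm_exp_I {z : ℂ} (r : ℝ) (h : z = (r:ℂ)*Complex.I) : ‖Complex.exp z‖ = 1 := by
  rw [h, Complex.norm_exp_ofReal_mul_I]

lemma aux_norm_exp_omega (ω x : ℝ) :
    ‖Complex.exp (-(Complex.I * (ω:ℂ) * (x:ℂ)))‖ = 1 :=
  aux_norm_exp_I (-(ω*x)) (by push_cast; ring)

lemma aux_norm_exp_np (n p : ℤ) (x : ℝ) :
    ‖Complex.exp (-(2 * (Real.pi:ℂ) * Complex.I * ((n:ℂ) - (p:ℂ)) * (x:ℂ)))‖ = 1 :=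
  aux_norm_exp_I (-(2*Real.pi*((n:ℝ)-(p:ℝ))*x)) (by push_cast; ring)

lemma aux_inv_norm (ω : ℝ) : ‖(1/(Complex.I * (ω:ℂ)))‖ = 1/|ω| := by
  rw [norm_div, norm_one, norm_mul, Complex.norm_I, Complex.norm_real, Real.norm_eq_abs,
    one_mul]

lemma aux_IG_norm {G : ℝ → ℂ} (hG : IntervalIntegrable G volume 0 1) (ω : ℝ) :
    ‖∫ x in (0:ℝ)..1, G x * Complex.exp (-(Complex.I * (ω:ℂ) * (x:ℂ)))‖
      ≤ ∫ x in (0:ℝ)..1, ‖G x‖ := by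
  refine (intervalIntegral.norm_integral_le_integral_norm zero_le_one).trans (le_of_eq ?_)
  congr 1
  ext x
  rw [norm_mul, aux_norm_exp_omega, mul_one]


lemma aux_ii {f : ℝ → ℂ} (hf : IntegrableOn f (Set.Icc (0:ℝ) 1)) :
    IntervalIntegrable f volume 0 1 := by
  rw [intervalIntegrable_iff, Set.uIoc_of_le zero_le_one]
  exact hf.mono_set Set.Ioc_subset_Icc_self

lemma aux_Ib_norm {a : ℝ → ℂ} (ha : IntervalIntegrable a volume 0 1) (n p : ℤ) :
    ‖∫ x in (0:ℝ)..1, a x * Complex.exp (-(2 * (Real.pi:ℂ) * Complex.I * ((n:ℂ) - (p:ℂ)) * (x:ℂ)))‖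
      ≤ ∫ x in (0:ℝ)..1, ‖a x‖ := by
  refine (intervalIntegral.norm_integral_le_integral_norm zero_le_one).trans (le_of_eq ?_)
  congr 1
  ext x
  rw [norm_mul, aux_norm_exp_np, mul_one]
lemma aux_comp {m : ℕ} {f : ℝ → Fin m → ℂ} {a b : ℝ} (hf : IntervalIntegrable f volume a b)
    (q : Fin m) : (∫ s in a..b, f s) q = ∫ s in a..b, f s q := by
  have := (ContinuousLinearMap.proj (R := ℂ) (φ := fun _ : Fin m => ℂ) q).intervalIntegral_comp_comm hf
  simpa using this.symm

section ctx
variable {m : ℕ} {t : ℝ} {Ψ D G : ℝ → Fin m → ℂ}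
  (ht : t ∈ Set.Ioo 0 (2*Real.pi))
  (hG : IntegrableOn G (Set.Icc (0:ℝ) 1))
  (hΨr : ∀ x ∈ Set.Icc (0:ℝ) 1, Ψ x = Ψ 0 + ∫ s in (0:ℝ)..x, D s)
  (hDr : ∀ x ∈ Set.Icc (0:ℝ) 1, D x = D 0 + ∫ s in (0:ℝ)..x, G s)
  (hbcΨ : Ψ 1 = Complex.exp (Complex.I * (t : ℂ)) • Ψ 0)
  (hbcD : D 1 = Complex.exp (Complex.I * (t : ℂ)) • D 0)

include hG hDr in
lemma aux_Dcont : ContinuousOn D (Set.Icc (0:ℝ) 1) := by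
  have h : ContinuousOn (fun x => D 0 + ∫ s in (0:ℝ)..x, G s) (Set.Icc (0:ℝ) 1) := by
    apply ContinuousOn.add continuousOn_const
    have := intervalIntegral.continuousOn_primitive_interval (a := 0) (b := 1) (f := G)
      (μ := volume) (by rwa [Set.uIcc_of_le zero_le_one])
    rwa [Set.uIcc_of_le zero_le_one] at this
  exact h.congr hDr

include hG hDr hΨr in
lemma aux_Psicont : ContinuousOn Ψ (Set.Icc (0:ℝ) 1) := by
  have hDc := aux_Dcont hG hDr
  have h : ContinuousOn (fun x => Ψ 0 + ∫ s in (0:ℝ)..x, D s) (Set.Icc (0:ℝ) 1) := by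
    apply ContinuousOn.add continuousOn_const
    have := intervalIntegral.continuousOn_primitive_interval (a := 0) (b := 1) (f := D)
      (μ := volume) (by rw [Set.uIcc_of_le zero_le_one]; exact hDc.integrableOn_Icc)
    rwa [Set.uIcc_of_le zero_le_one] at this
  exact h.congr hΨr

include ht hG hΨr hDr hbcΨ hbcD in
lemma aux_coeff (q : Fin m) (p : ℤ) :
    ∫ x in (0:ℝ)..1, Ψ x q * Complex.exp (-(Complex.I * ((2*Real.pi*(p:ℝ)+t : ℝ):ℂ) * x))
      = (1/(Complex.I * ((2*Real.pi*(p:ℝ)+t : ℝ):ℂ)))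
        * ((1/(Complex.I * ((2*Real.pi*(p:ℝ)+t : ℝ):ℂ)))
          * ∫ x in (0:ℝ)..1, G x q * Complex.exp (-(Complex.I * ((2*Real.pi*(p:ℝ)+t : ℝ):ℂ) * x))) := by
  have hω : 2*Real.pi*(p:ℝ) + t ≠ 0 := aux_omega_ne ht p
  have hDc := aux_Dcont hG hDr
  have hGq : IntegrableOn (fun x => G x q) (Set.Icc (0:ℝ) 1) :=
    (ContinuousLinearMap.proj (R := ℂ) (φ := fun _ : Fin m => ℂ) q).integrable_comp hG
  have hDq : IntegrableOn (fun x => D x q) (Set.Icc (0:ℝ) 1) :=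
    ((continuous_apply q).comp_continuousOn hDc).integrableOn_Icc
  have hDrq : ∀ x ∈ Set.Icc (0:ℝ) 1, D x q = D 0 q + ∫ s in (0:ℝ)..x, G s q := by
    intro x hx
    have h1 := congrFun (hDr x hx) q
    rw [Pi.add_apply] at h1
    rw [h1, aux_comp]
    rw [intervalIntegrable_iff, uIoc_of_le hx.1]
    exact hG.mono_set (Set.Ioc_subset_Icc_self.trans (Set.Icc_subset_Icc_right hx.2))
  have hΨrq : ∀ x ∈ Set.Icc (0:ℝ) 1, Ψ x q = Ψ 0 q + ∫ s in (0:ℝ)..x, D s q := by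
    intro x hx
    have h1 := congrFun (hΨr x hx) q
    rw [Pi.add_apply] at h1
    rw [h1, aux_comp]
    apply ContinuousOn.intervalIntegrable
    rw [Set.uIcc_of_le hx.1]
    exact hDc.mono (Set.Icc_subset_Icc_right hx.2)
  have key : ∀ (u : ℝ → Fin m → ℂ), u 1 = Complex.exp (Complex.I * (t : ℂ)) • u 0 →
      Complex.exp (-(Complex.I * ((2*Real.pi*(p:ℝ)+t : ℝ):ℂ))) * u 1 q = u 0 q := by
    intro u hu
    have h1 : u 1 q = Complex.exp (Complex.I * (t:ℂ)) * u 0 q := by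
      rw [hu]; simp [Pi.smul_apply, smul_eq_mul]
    rw [h1, ← mul_assoc, ← Complex.exp_add]
    have h2 : -(Complex.I * ((2*Real.pi*(p:ℝ)+t : ℝ):ℂ)) + Complex.I * (t:ℂ)
        = ((-p : ℤ) : ℂ) * (2*(Real.pi:ℂ)*Complex.I) := by push_cast; ring
    rw [h2, Complex.exp_int_mul_two_pi_mul_I, one_mul]
  rw [aux_ibp hDq hΨrq hω (key Ψ hbcΨ), aux_ibp hGq hDrq hω (key D hbcD)]
end ctx


section ctx3
variable {m : ℕ} {t : ℝ} {Ψ D G : ℝ → Fin m → ℂ}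
  (ht : t ∈ Set.Ioo 0 (2*Real.pi))
  (hG : IntegrableOn G (Set.Icc (0:ℝ) 1))
  (hΨr : ∀ x ∈ Set.Icc (0:ℝ) 1, Ψ x = Ψ 0 + ∫ s in (0:ℝ)..x, D s)
  (hDr : ∀ x ∈ Set.Icc (0:ℝ) 1, D x = D 0 + ∫ s in (0:ℝ)..x, G s)
  (hbcΨ : Ψ 1 = Complex.exp (Complex.I * (t : ℂ)) • Ψ 0)
  (hbcD : D 1 = Complex.exp (Complex.I * (t : ℂ)) • D 0)

include ht hG hΨr hDr hbcΨ hbcD in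
lemma aux_coeff_norm (q : Fin m) (p : ℤ) :
    ‖∫ x in (0:ℝ)..1, Ψ x q * Complex.exp (-(Complex.I * ((2*Real.pi*(p:ℝ)+t : ℝ):ℂ) * x))‖
      ≤ (∫ x in (0:ℝ)..1, ‖G x q‖) * (1/(2*Real.pi*(p:ℝ)+t)^2) := by
  set ω : ℝ := 2*Real.pi*(p:ℝ)+t with hw
  have hω : ω ≠ 0 := aux_omega_ne ht p
  have hGq : IntegrableOn (fun x => G x q) (Set.Icc (0:ℝ) 1) :=
    (ContinuousLinearMap.proj (R := ℂ) (φ := fun _ : Fin m => ℂ) q).integrable_comp hG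
  have hIG : ‖∫ x in (0:ℝ)..1, G x q * Complex.exp (-(Complex.I * (ω:ℂ) * (x:ℂ)))‖
      ≤ ∫ x in (0:ℝ)..1, ‖G x q‖ := aux_IG_norm (aux_ii hGq) ω
  rw [aux_coeff ht hG hΨr hDr hbcΨ hbcD q p]
  rw [norm_mul, norm_mul, aux_inv_norm]
  have h1 : (0:ℝ) ≤ 1/|ω| := by positivity
  calc 1/|ω| * (1/|ω| * ‖∫ x in (0:ℝ)..1, G x q * Complex.exp (-(Complex.I * (ω:ℂ) * (x:ℂ)))‖)
      ≤ 1/|ω| * (1/|ω| * ∫ x in (0:ℝ)..1, ‖G x q‖) := by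
        refine mul_le_mul_of_nonneg_left (mul_le_mul_of_nonneg_left hIG h1) h1
    _ = (∫ x in (0:ℝ)..1, ‖G x q‖) * (1/ω^2) := by
        rw [← _root_.sq_abs ω]
        ring
end ctx3
section ctx2
variable {m : ℕ} {t : ℝ} {Ψ : ℝ → Fin m → ℂ}

/-- Core interchange lemma: if the Fourier-type coefficients `cp` of `Ψ · q` are norm-summable
and sum pointwise (which we get from `hΨc`, `hbcΨ`, `hsum`), then the Fourier expansion holds. -/
lemma aux_slice
    (ht : t ∈ Set.Ioo 0 (2*Real.pi))
    (hΨc : ContinuousOn Ψ (Set.Icc (0:ℝ) 1))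
    (hbcΨ : Ψ 1 = Complex.exp (Complex.I * (t : ℂ)) • Ψ 0)
    (q : Fin m)
    (hsum : Summable (fun p : ℤ => ‖∫ x in (0:ℝ)..1,
        Ψ x q * Complex.exp (-(Complex.I * ((2*Real.pi*(p:ℝ)+t : ℝ):ℂ) * x))‖))
    (a : ℝ → ℂ) (ha : IntegrableOn a (Set.Icc (0:ℝ) 1)) (n : ℤ) :
    ∫ x in (0:ℝ)..1, a x * Ψ x q * Complex.exp (-(Complex.I * ((2*Real.pi*(n:ℝ)+t : ℝ):ℂ) * x))
      = ∑' p : ℤ,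
        (∫ x in (0:ℝ)..1, a x * Complex.exp (-(2 * (Real.pi:ℂ) * Complex.I * ((n:ℂ) - (p:ℂ)) * (x:ℂ))))
          * (∫ x in (0:ℝ)..1, Ψ x q * Complex.exp (-(Complex.I * ((2*Real.pi*(p:ℝ)+t : ℝ):ℂ) * x))) := by
  haveI : Fact ((0:ℝ) < 1) := ⟨one_pos⟩
  set cp : ℤ → ℂ := fun p => ∫ x in (0:ℝ)..1,
      Ψ x q * Complex.exp (-(Complex.I * ((2*Real.pi*(p:ℝ)+t : ℝ):ℂ) * x)) with hcp
  -- the periodic function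
  set g : ℝ → ℂ := fun x => Ψ x q * Complex.exp (-(Complex.I * (t:ℂ) * (x:ℂ))) with hg
  have hΨq : ContinuousOn (fun x => Ψ x q) (Set.Icc (0:ℝ) 1) :=
    (continuous_apply q).comp_continuousOn hΨc
  have hgc : ContinuousOn g (Set.Icc (0:ℝ) (0+1)) := by
    rw [zero_add]
    exact hΨq.mul (by fun_prop : Continuous fun x : ℝ =>
      Complex.exp (-(Complex.I * (t:ℂ) * (x:ℂ)))).continuousOn
  have hΨ1q : Ψ 1 q = Complex.exp (Complex.I * (t:ℂ)) * Ψ 0 q := by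
    rw [hbcΨ]; simp [Pi.smul_apply, smul_eq_mul]
  have hg01 : g 0 = g (0+1) := by
    rw [zero_add, hg]
    simp only [Complex.ofReal_zero, Complex.ofReal_one, mul_zero, neg_zero, Complex.exp_zero,
      mul_one, hΨ1q]
    rw [mul_comm (Complex.exp (Complex.I * (t:ℂ))) (Ψ 0 q), mul_assoc, ← Complex.exp_add]
    simp
  set F : C(AddCircle (1:ℝ), ℂ) :=
    ⟨AddCircle.liftIco 1 0 g, AddCircle.liftIco_continuous hg01 hgc⟩ with hF
  have hFx : ∀ x : ℝ, x ∈ Set.Ioo (0:ℝ) 1 → F (x : AddCircle (1:ℝ)) = g x := by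
    intro x hx
    simp only [hF, ContinuousMap.coe_mk]
    exact AddCircle.liftIco_coe_apply ⟨hx.1.le, by rw [zero_add]; exact hx.2⟩
  have hFcoeff : ∀ p : ℤ, fourierCoeff (⇑F) p = cp p := by
    intro p
    rw [fourierCoeff_eq_intervalIntegral (⇑F) p 0]
    simp only [hcp]
    rw [zero_add, one_div_one, one_smul]
    rw [intervalIntegral.integral_of_le zero_le_one, intervalIntegral.integral_of_le zero_le_one,
      MeasureTheory.integral_Ioc_eq_integral_Ioo, MeasureTheory.integral_Ioc_eq_integral_Ioo]
    refine setIntegral_congr_fun measurableSet_Ioo fun x hx => ?_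
    rw [hFx x hx, smul_eq_mul, fourier_coe_apply, hg]
    rw [mul_comm, mul_assoc, ← Complex.exp_add]
    congr 1
    push_cast
    field_simp
    ring
  have hFs : Summable (fourierCoeff (⇑F)) :=
    (Summable.of_norm hsum).congr fun p => (hFcoeff p).symm
  have hpt : ∀ x : ℝ, x ∈ Set.Ioo (0:ℝ) 1 →
      HasSum (fun p : ℤ => cp p * Complex.exp (2 * (Real.pi:ℂ) * Complex.I * (p:ℂ) * (x:ℂ))) (g x) := by
    intro x hx
    have h := has_pointwise_sum_fourier_series_of_summable hFs (x : AddCircle (1:ℝ))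
    rw [hFx x hx] at h
    refine h.congr_fun fun p => ?_
    rw [hFcoeff p, smul_eq_mul, fourier_coe_apply]
    congr 2
    push_cast
    field_simp
  -- the summands
  set Fp : ℤ → ℝ → ℂ := fun p x =>
    (a x * Complex.exp (-(2 * (Real.pi:ℂ) * Complex.I * ((n:ℂ) - (p:ℂ)) * (x:ℂ)))) * cp p with hFp
  have haIoo : IntegrableOn a (Set.Ioo (0:ℝ) 1) := ha.mono_set Set.Ioo_subset_Icc_self
  have hFpint : ∀ p : ℤ, Integrable (Fp p) (volume.restrict (Set.Ioo (0:ℝ) 1)) := by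
    intro p
    apply Integrable.mul_const
    exact ((ha.mul_continuousOn (by fun_prop : Continuous fun x : ℝ =>
      Complex.exp (-(2 * (Real.pi:ℂ) * Complex.I * ((n:ℂ) - (p:ℂ)) * (x:ℂ)))).continuousOn
      isCompact_Icc).mono_set Set.Ioo_subset_Icc_self)
  have hFpnorm : ∀ p : ℤ, ∫ x in Set.Ioo (0:ℝ) 1, ‖Fp p x‖
      = (∫ x in Set.Ioo (0:ℝ) 1, ‖a x‖) * ‖cp p‖ := by
    intro p
    rw [← integral_mul_const]
    congr 1; ext x
    simp only [hFp]
    simp only [norm_mul, aux_norm_exp_np, mul_one]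
  have hsum2 : Summable (fun p : ℤ => ∫ x in Set.Ioo (0:ℝ) 1, ‖Fp p x‖) := by
    refine Summable.congr (hsum.mul_left (∫ x in Set.Ioo (0:ℝ) 1, ‖a x‖)) fun p => ?_
    rw [hFpnorm p]
  have hint := MeasureTheory.integral_tsum_of_summable_integral_norm hFpint hsum2
  have hrhs : ∫ x in Set.Ioo (0:ℝ) 1, (∑' p : ℤ, Fp p x)
      = ∫ x in Set.Ioo (0:ℝ) 1,
          a x * Ψ x q * Complex.exp (-(Complex.I * ((2*Real.pi*(n:ℝ)+t : ℝ):ℂ) * x)) := by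
    refine setIntegral_congr_fun measurableSet_Ioo fun x hx => ?_
    have h := (hpt x hx).mul_left
      (a x * Complex.exp (-(2 * (Real.pi:ℂ) * Complex.I * (n:ℂ) * (x:ℂ))))
    have heq : ∀ p : ℤ, Fp p x
        = (a x * Complex.exp (-(2*(Real.pi:ℂ)*Complex.I*(n:ℂ)*(x:ℂ))))
          * (cp p * Complex.exp (2*(Real.pi:ℂ)*Complex.I*(p:ℂ)*(x:ℂ))) := by
      intro p
      simp only [hFp]
      have he : Complex.exp (-(2*(Real.pi:ℂ)*Complex.I*(n:ℂ)*(x:ℂ)))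
          * Complex.exp (2*(Real.pi:ℂ)*Complex.I*(p:ℂ)*(x:ℂ))
          = Complex.exp (-(2*(Real.pi:ℂ)*Complex.I*((n:ℂ)-(p:ℂ))*(x:ℂ))) := by
        rw [← Complex.exp_add]; congr 1; ring
      rw [← he]; ring
    have hval : (a x * Complex.exp (-(2*(Real.pi:ℂ)*Complex.I*(n:ℂ)*(x:ℂ)))) * g x
        = a x * Ψ x q * Complex.exp (-(Complex.I * ((2*Real.pi*(n:ℝ)+t : ℝ):ℂ) * x)) := by
      simp only [hg]
      have he : Complex.exp (-(2*(Real.pi:ℂ)*Complex.I*(n:ℂ)*(x:ℂ)))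
          * Complex.exp (-(Complex.I*(t:ℂ)*(x:ℂ)))
          = Complex.exp (-(Complex.I * ((2*Real.pi*(n:ℝ)+t : ℝ):ℂ) * x)) := by
        rw [← Complex.exp_add]; congr 1; push_cast; ring
      rw [← he]; ring
    have hs2 : HasSum (fun p : ℤ => Fp p x)
        (a x * Ψ x q * Complex.exp (-(Complex.I * ((2*Real.pi*(n:ℝ)+t : ℝ):ℂ) * x))) := by
      rw [← hval]
      exact h.congr_fun heq
    exact hs2.tsum_eq
  calc ∫ x in (0:ℝ)..1, a x * Ψ x q * Complex.exp (-(Complex.I * ((2*Real.pi*(n:ℝ)+t : ℝ):ℂ) * x))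
      = ∫ x in Set.Ioo (0:ℝ) 1,
          a x * Ψ x q * Complex.exp (-(Complex.I * ((2*Real.pi*(n:ℝ)+t : ℝ):ℂ) * x)) := by
        rw [intervalIntegral.integral_of_le zero_le_one,
          MeasureTheory.integral_Ioc_eq_integral_Ioo]
    _ = ∫ x in Set.Ioo (0:ℝ) 1, (∑' p : ℤ, Fp p x) := hrhs.symm
    _ = ∑' p : ℤ, ∫ x in Set.Ioo (0:ℝ) 1, Fp p x := hint.symm
    _ = ∑' p : ℤ,
        (∫ x in (0:ℝ)..1, a x * Complex.exp (-(2 * (Real.pi:ℂ) * Complex.I * ((n:ℂ) - (p:ℂ)) * (x:ℂ))))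
          * cp p := by
        congr 1
        ext p
        simp only [hFp]
        rw [MeasureTheory.integral_mul_const]
        congr 1
        rw [intervalIntegral.integral_of_le zero_le_one,
          MeasureTheory.integral_Ioc_eq_integral_Ioo]
    _ = _ := by simp only [hcp]
end ctx2


/-- For `|k| ≥ N` and a normalized eigenpair `(λ, Ψ)` with
`|λ − (2πk+t)²| ≤ K(1+|k|)^{1−1/m}`, for all `n ∈ ℤ`, `s`:
`(QΨ, φ_{n,s}) = ∑_{q,p} b_{s,q,n−p} (Ψ, φ_{p,q})`, the double series converging
absolutely, where `b_{s,q,l} = ∫₀¹ b_{s,q}(x) e^{−2πi l x} dx`. -/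
theorem fourier_expansion_of_QPsi (m : ℕ) (hm : 1 ≤ m) (t : ℝ)
    (ht : t ∈ Set.Ioo 0 (2 * Real.pi)) (htpi : t ≠ Real.pi) (K : ℝ) (hK : 0 < K)
    (Q : ℝ → Matrix (Fin m) (Fin m) ℂ)
    (hQ : ∀ i j, MeasureTheory.IntegrableOn (fun x => Q x i j) (Set.Icc (0:ℝ) 1)) :
    ∃ N : ℕ, ∀ k : ℤ, (N : ℤ) ≤ |k| →
      ∀ (lam : ℂ) (Ψ : ℝ → Fin m → ℂ), IsEigenpair m t Q lam Ψ → l2norm m Ψ = 1 →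
        ‖lam - (((2 * Real.pi * (k : ℝ) + t) ^ 2 : ℝ) : ℂ)‖
            ≤ K * (1 + (|k| : ℝ)) ^ ((1 : ℝ) - 1 / (m : ℝ)) →
        ∀ (n : ℤ) (s : Fin m),
          Summable (fun pq : Fin m × ℤ =>
            ‖(∫ x in (0:ℝ)..1,
                Q x s pq.1 * Complex.exp (-(2 * Real.pi * Complex.I * (((n : ℂ) - (pq.2 : ℂ))) * (x : ℂ))))
              * ip m Ψ (phi m t pq.2 pq.1)‖) ∧
          ip m (fun x => (Q x).mulVec (Ψ x)) (phi m t n s)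
            = ∑' pq : Fin m × ℤ,
                (∫ x in (0:ℝ)..1,
                  Q x s pq.1 * Complex.exp (-(2 * Real.pi * Complex.I * (((n : ℂ) - (pq.2 : ℂ))) * (x : ℂ))))
                * ip m Ψ (phi m t pq.2 pq.1) := by
  classical
  refine ⟨0, fun k hk lam Ψ hEig hnorm hlam n s => ?_⟩
  obtain ⟨-, D, G, hG, hΨr, hDr, -, hbcΨ, hbcD⟩ := hEig
  have hΨc : ContinuousOn Ψ (Set.Icc (0:ℝ) 1) := aux_Psicont hG hΨr hDr
  -- norm-summability of the coefficient sequence, for each component q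
  have hcsn : ∀ q : Fin m, Summable (fun p : ℤ => ‖∫ x in (0:ℝ)..1,
      Ψ x q * Complex.exp (-(Complex.I * ((2*Real.pi*(p:ℝ)+t : ℝ):ℂ) * x))‖) := by
    intro q
    exact Summable.of_nonneg_of_le (fun p => norm_nonneg _)
      (fun p => aux_coeff_norm ht hG hΨr hDr hbcΨ hbcD q p)
      ((aux_wsummable ht).mul_left _)
  have hbnorm : ∀ (q : Fin m) (p : ℤ),
      ‖∫ x in (0:ℝ)..1, Q x s q * Complex.exp (-(2 * (Real.pi:ℂ) * Complex.I * ((n:ℂ) - (p:ℂ)) * (x:ℂ)))‖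
        ≤ ∫ x in (0:ℝ)..1, ‖Q x s q‖ := fun q p => aux_Ib_norm (aux_ii (hQ s q)) n p
  -- absolute summability of the double series
  have habs : Summable (fun pq : Fin m × ℤ =>
      ‖(∫ x in (0:ℝ)..1,
          Q x s pq.1 * Complex.exp (-(2 * Real.pi * Complex.I * (((n : ℂ) - (pq.2 : ℂ))) * (x : ℂ))))
        * ip m Ψ (phi m t pq.2 pq.1)‖) := by
    refine (summable_prod_of_nonneg (fun pq => norm_nonneg _)).mpr ⟨fun q => ?_, Summable.of_finite⟩
    simp only [aux_ip_eq]
    refine Summable.of_nonneg_of_le (fun p => norm_nonneg _) (fun p => ?_)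
      ((hcsn q).mul_left (∫ x in (0:ℝ)..1, ‖Q x s q‖))
    rw [norm_mul]
    exact mul_le_mul_of_nonneg_right (hbnorm q p) (norm_nonneg _)
  refine ⟨habs, ?_⟩
  -- the identity
  have hsumc : Summable (fun pq : Fin m × ℤ =>
      (∫ x in (0:ℝ)..1,
          Q x s pq.1 * Complex.exp (-(2 * Real.pi * Complex.I * (((n : ℂ) - (pq.2 : ℂ))) * (x : ℂ))))
        * ip m Ψ (phi m t pq.2 pq.1)) := habs.of_norm
  rw [Summable.tsum_prod' hsumc (fun q => hsumc.prod_factor q)]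
  -- expand the left-hand side as a finite sum over q
  have hL : ip m (fun x => (Q x).mulVec (Ψ x)) (phi m t n s)
      = ∑ q : Fin m, ∫ x in (0:ℝ)..1,
          Q x s q * Ψ x q * Complex.exp (-(Complex.I * ((2*Real.pi*(n:ℝ)+t : ℝ):ℂ) * x)) := by
    unfold ip phi
    rw [← intervalIntegral.integral_finset_sum]
    · congr 1
      ext x
      rw [Finset.sum_eq_single s]
      · rw [if_pos rfl, aux_conj_exp]
        have hmv : (Q x).mulVec (Ψ x) s = ∑ q : Fin m, Q x s q * Ψ x q := by
          simp [Matrix.mulVec, dotProduct]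
        beta_reduce
        rw [hmv, Finset.sum_mul]
      · intro i _ hi; rw [if_neg hi, map_zero, mul_zero]
      · intro h; exact absurd (Finset.mem_univ s) h
    · intro q _
      have h1 : IntegrableOn (fun x => Q x s q * Ψ x q) (Set.Icc (0:ℝ) 1) :=
        (hQ s q).mul_continuousOn ((continuous_apply q).comp_continuousOn hΨc) isCompact_Icc
      have h2 : IntegrableOn (fun x => Q x s q * Ψ x q * Complex.exp
          (-(Complex.I * ((2*Real.pi*(n:ℝ)+t : ℝ):ℂ) * x))) (Set.Icc (0:ℝ) 1) :=
        h1.mul_continuousOn (by fun_prop : Continuous fun x : ℝ =>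
          Complex.exp (-(Complex.I * ((2*Real.pi*(n:ℝ)+t : ℝ):ℂ) * x))).continuousOn isCompact_Icc
      exact aux_ii h2
  rw [hL]
  rw [tsum_fintype]
  refine Finset.sum_congr rfl fun q _ => ?_
  have := aux_slice ht hΨc hbcΨ q (hcsn q) (fun x => Q x s q) (hQ s q) n
  rw [this]
  congr 1
  ext p
  rw [aux_ip_eq]
end
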